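/- arXiv:math/0502453 — 3 statements merged into one kernel-verified Lean document; each statement's English description precedes it below -/
import Mathlib

section
/- Let g be a real measurable function on a probability space (Δ, μ) whose distribution is in the nonstandard domain of attraction of the Gaussian law N(0,1), and let L(x) = ∫ 1_{|g|≤x}·g² dμ. Then, uniformly over bounded measurable functions w : Δ → ℂ, ∫ (e^{itg} − 1 − itg)·w dμ = −(t²/2)·∫ 1_{|g| ≤ 1/|t|}·g²·w dμ + ‖w‖_∞·o(t²·L(1/|t|)) as t → 0. Precisely: for every ε > 0 there exists δ > 0 such that for all t with 0 < |t| < δ and all bounded measurable w : Δ → ℂ, |∫ (e^{itg} − 1 − itg)·w dμ + (t²/2)·∫ 1_{|g| ≤ 1/|t|}·g²·w dμ| ≤ ε·‖w‖_∞·t²·L(1/|t|). -/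
open MeasureTheory Filter Set
open scoped ENNReal NNReal Topology Classical

/-- A function `f : ℝ → ℝ` is slowly varying if `f (λ x) / f x → 1` as `x → ∞`,
for every `λ > 0`. -/
def SlowlyVarying (f : ℝ → ℝ) : Prop :=
  ∀ lam : ℝ, 0 < lam → Filter.Tendsto (fun x => f (lam * x) / f x) Filter.atTop (nhds 1)

/-!
Split the integral at `|g| = a/|t|` and `|g| = 1/|t|`. On `|g| ≤ a/|t|` the third-order Taylor
bound for `e^{iu}` contributes `a t² L(a/|t|)`. On `a/|t| < |g| ≤ 1/|t|` the second-order bound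
contributes `O(t² (L(1/|t|) - L(a/|t|)))`, which is `o(t² L(1/|t|))` by slow variation. On
`|g| > 1/|t|` the bound `|e^{iu} - 1 - iu| ≤ 2|u|` leaves `|t| ∫_{|g| > 1/|t|} |g|`, and the tail
estimate `∫_{|g| > x} |g| ≤ 4η L(x)/x` follows from `L(2y) ≤ (1 + η) L(y)` (slow variation,
`y ≥ x` large) by summing `L(2^{k+1}x) - L(2^k x) ≤ η (1 + η)^k L(x)` over the dyadic shells
`2^k x < |g| ≤ 2^{k+1} x`.
-/

lemma exists_two_pow_mul_lt_and_le {c z : ℝ} (hcz : c < z) (hc : 0 < c) :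
    ∃ k : ℕ, 2 ^ k * c < z ∧ z ≤ 2 ^ (k + 1) * c := by
  obtain ⟨n, hn⟩ := pow_unbounded_of_one_lt (z / c) one_lt_two
  replace hn : z ≤ 2 ^ n * c := ((div_lt_iff₀ hc).mp hn).le
  induction n with
  | zero => rw [pow_zero, one_mul] at hn; linarith
  | succ n ih =>
    by_cases h : z ≤ 2 ^ n * c
    · exact ih h
    · exact ⟨n, not_le.mp h, hn⟩

section TruncatedSecondMoment

variable {Δ : Type*} [MeasurableSpace Δ] {μ : Measure Δ} {g : Δ → ℝ}

noncomputable def truncSecondMoment (μ : Measure Δ) (g : Δ → ℝ) (x : ℝ) : ℝ :=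
  ∫ y in {y | |g y| ≤ x}, g y ^ 2 ∂μ

lemma truncSecondMoment_nonneg (x : ℝ) : 0 ≤ truncSecondMoment μ g x :=
  integral_nonneg fun y => sq_nonneg (g y)

lemma setIntegral_abs_le_of_setLIntegral_enorm_le (hgi : Integrable g μ) {S : Set Δ} {C : ℝ}
    (hC : 0 ≤ C) (h : ∫⁻ z in S, ‖g z‖ₑ ∂μ ≤ ENNReal.ofReal C) : ∫ z in S, |g z| ∂μ ≤ C := by
  rw [← ENNReal.ofReal_le_ofReal_iff hC]
  have hnorm := ofReal_integral_norm_eq_lintegral_enorm (hgi.integrableOn (s := S))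
  simp only [Real.norm_eq_abs] at hnorm
  exact hnorm ▸ h

variable [IsFiniteMeasure μ]

lemma integrableOn_sq_of_subset_abs_le (hg : Measurable g) {S : Set Δ} {x : ℝ}
    (hS : S ⊆ {y | |g y| ≤ x}) : IntegrableOn (fun y => g y ^ 2) S μ := by
  refine IntegrableOn.mono_set ?_ hS
  refine Measure.integrableOn_of_bounded (M := x ^ 2) (measure_ne_top μ _)
    (hg.pow_const 2).aestronglyMeasurable ?_
  refine ae_restrict_of_forall_mem (measurableSet_le hg.abs measurable_const) fun y hy => ?_
  rw [Real.norm_eq_abs, abs_pow, pow_two, pow_two]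
  exact mul_self_le_mul_self (abs_nonneg _) hy

lemma truncSecondMoment_sub (hg : Measurable g) {x y : ℝ} (hxy : x ≤ y) :
    truncSecondMoment μ g y - truncSecondMoment μ g x =
      ∫ z in {z | |g z| ≤ y} \ {z | |g z| ≤ x}, g z ^ 2 ∂μ :=
  (setIntegral_sdiff (measurableSet_le hg.abs measurable_const)
    (integrableOn_sq_of_subset_abs_le hg subset_rfl) fun _ hz => le_trans hz hxy).symm

lemma truncSecondMoment_mono (hg : Measurable g) : Monotone (truncSecondMoment μ g) :=
  fun _ _ hxy => sub_nonneg.mp <|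
    (truncSecondMoment_sub (μ := μ) hg hxy).symm ▸ integral_nonneg fun z => sq_nonneg (g z)

lemma lintegral_enorm_annulus_le (hg : Measurable g) {x y : ℝ} (hx : 0 < x) (hxy : x ≤ y) :
    ∫⁻ z in {z | |g z| ≤ y} \ {z | |g z| ≤ x}, ‖g z‖ₑ ∂μ ≤
      ENNReal.ofReal ((truncSecondMoment μ g y - truncSecondMoment μ g x) / x) := by
  rw [truncSecondMoment_sub hg hxy, ← integral_div, ofReal_integral_eq_lintegral_ofReal
    ((integrableOn_sq_of_subset_abs_le hg sdiff_subset).div_const x)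
    (Eventually.of_forall fun z => by positivity)]
  refine setLIntegral_mono ((hg.pow_const 2).div_const x).ennreal_ofReal fun z hz => ?_
  rw [Real.enorm_eq_ofReal_abs]
  refine ENNReal.ofReal_le_ofReal ?_
  have hxz : x < |g z| := not_le.mp hz.2
  rw [le_div_iff₀ hx, ← sq_abs]
  nlinarith [abs_nonneg (g z)]

lemma lintegral_enorm_dyadic_shell_le_of_doubling (hg : Measurable g) {x η : ℝ} (hx : 0 < x)
    (hη₀ : 0 ≤ η)
    (hdouble : ∀ y, x ≤ y → truncSecondMoment μ g (2 * y) ≤ (1 + η) * truncSecondMoment μ g y)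
    (k : ℕ) :
    ∫⁻ z in {z | |g z| ≤ 2 ^ (k + 1) * x} \ {z | |g z| ≤ 2 ^ k * x}, ‖g z‖ₑ ∂μ ≤
      ENNReal.ofReal (η * truncSecondMoment μ g x / x * ((1 + η) / 2) ^ k) := by
  set T := truncSecondMoment μ g
  have hdouble_pow (j : ℕ) : T (2 ^ (j + 1) * x) ≤ (1 + η) * T (2 ^ j * x) := by
    rw [pow_succ', mul_assoc]
    exact hdouble _ (le_mul_of_one_le_left hx.le (one_le_pow₀ one_le_two))
  have hgrowth (j : ℕ) : T (2 ^ j * x) ≤ (1 + η) ^ j * T x := by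
    induction j with
    | zero => simp
    | succ j ih => calc
        T (2 ^ (j + 1) * x) ≤ (1 + η) * T (2 ^ j * x) := hdouble_pow j
        _ ≤ (1 + η) * ((1 + η) ^ j * T x) := by gcongr
        _ = (1 + η) ^ (j + 1) * T x := by ring
  have hk : 0 < 2 ^ k * x := by positivity
  refine (lintegral_enorm_annulus_le hg hk ?_).trans (ENNReal.ofReal_le_ofReal ?_)
  · rw [pow_succ]; nlinarith
  · have hjump : T (2 ^ (k + 1) * x) - T (2 ^ k * x) ≤ η * ((1 + η) ^ k * T x) := by
      nlinarith [hdouble_pow k, hgrowth k]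
    calc (T (2 ^ (k + 1) * x) - T (2 ^ k * x)) / (2 ^ k * x)
        ≤ η * ((1 + η) ^ k * T x) / (2 ^ k * x) := by gcongr
      _ = η * T x / x * ((1 + η) / 2) ^ k := by rw [div_pow]; field_simp

lemma lintegral_enorm_tail_le_of_doubling (hg : Measurable g) {x η : ℝ} (hx : 0 < x)
    (hη₀ : 0 ≤ η) (hη₁ : η ≤ 1 / 2)
    (hdouble : ∀ y, x ≤ y → truncSecondMoment μ g (2 * y) ≤ (1 + η) * truncSecondMoment μ g y) :
    ∫⁻ z in {z | x < |g z|}, ‖g z‖ₑ ∂μ ≤ ENNReal.ofReal (4 * η * truncSecondMoment μ g x / x) := by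
  set T := truncSecondMoment μ g
  set r : ℝ := (1 + η) / 2 with hr
  have hcover : {z | x < |g z|} ⊆
      ⋃ k : ℕ, {z | |g z| ≤ 2 ^ (k + 1) * x} \ {z | |g z| ≤ 2 ^ k * x} := fun z hz => by
    obtain ⟨k, hk⟩ := exists_two_pow_mul_lt_and_le hz hx
    exact mem_iUnion.mpr ⟨k, hk.2, not_le.mpr hk.1⟩
  have hr₀ : 0 ≤ r := by positivity
  have hr₁ : r < 1 := by rw [hr]; linarith
  have hTx : 0 ≤ T x := truncSecondMoment_nonneg x
  calc ∫⁻ z in {z | x < |g z|}, ‖g z‖ₑ ∂μ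
      ≤ ∫⁻ z in ⋃ k : ℕ, {z | |g z| ≤ 2 ^ (k + 1) * x} \ {z | |g z| ≤ 2 ^ k * x}, ‖g z‖ₑ ∂μ :=
        lintegral_mono_set hcover
    _ ≤ ∑' k : ℕ, ∫⁻ z in {z | |g z| ≤ 2 ^ (k + 1) * x} \ {z | |g z| ≤ 2 ^ k * x}, ‖g z‖ₑ ∂μ :=
        lintegral_iUnion_le _ _
    _ ≤ ∑' k : ℕ, ENNReal.ofReal (η * T x / x * r ^ k) :=
        ENNReal.tsum_le_tsum (lintegral_enorm_dyadic_shell_le_of_doubling hg hx hη₀ hdouble)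
    _ = ENNReal.ofReal (η * T x / x * (1 - r)⁻¹) := by
      rw [← ENNReal.ofReal_tsum_of_nonneg (fun k => by positivity)
        ((summable_geometric_of_lt_one hr₀ hr₁).mul_left _), tsum_mul_left,
        tsum_geometric_of_lt_one hr₀ hr₁]
    _ ≤ ENNReal.ofReal (4 * η * T x / x) := by
      refine ENNReal.ofReal_le_ofReal ?_
      have hinv : (1 - r)⁻¹ ≤ 4 := by
        rw [inv_le_comm₀ (by linarith) (by norm_num), hr]; linarith
      calc η * T x / x * (1 - r)⁻¹ ≤ η * T x / x * 4 := by gcongr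
        _ = 4 * η * T x / x := by ring

lemma integrable_of_lintegral_enorm_tail_ne_top (hg : Measurable g) {x : ℝ}
    (htail : ∫⁻ z in {z | x < |g z|}, ‖g z‖ₑ ∂μ ≠ ∞) : Integrable g μ := by
  have hbdd : IntegrableOn g {z | |g z| ≤ x} μ :=
    Measure.integrableOn_of_bounded (M := x) (measure_ne_top μ _) hg.aestronglyMeasurable
      (ae_restrict_of_forall_mem (measurableSet_le hg.abs measurable_const) fun _ hz => hz)
  have htail' : IntegrableOn g {z | x < |g z|} μ :=
    ⟨hg.aestronglyMeasurable.restrict, htail.lt_top⟩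
  rw [← integrableOn_univ, ← union_compl_self {z | |g z| ≤ x}, compl_ofPred]
  simp_rw [not_le]
  exact hbdd.union htail'

end TruncatedSecondMoment

section ExpRemainder

open Complex

lemma norm_exp_I_mul_sub_one_sub_le_two_mul_abs (u : ℝ) :
    ‖cexp (I * u) - 1 - I * u‖ ≤ 2 * |u| := calc
  _ ≤ ‖cexp (I * u) - 1‖ + ‖I * (u : ℂ)‖ := norm_sub_le _ _
  _ ≤ |u| + |u| := by
    gcongr
    · exact Real.norm_exp_I_mul_ofReal_sub_one_le
    · simp
  _ = 2 * |u| := by ring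

lemma norm_exp_I_mul_sub_one_sub_le_sq {u : ℝ} (hu : |u| ≤ 1) :
    ‖cexp (I * u) - 1 - I * u‖ ≤ u ^ 2 := by
  have h := Complex.exp_bound (x := I * u) (by simpa using hu) (n := 2) two_pos
  norm_num [Finset.sum_range_succ, ← sub_sub] at h
  linarith [sq_abs u, sq_nonneg u]

lemma norm_exp_I_mul_sub_one_sub_add_sq_le {u : ℝ} (hu : |u| ≤ 1) :
    ‖cexp (I * u) - 1 - I * u + u ^ 2 / 2‖ ≤ |u| ^ 3 := by
  have h := Complex.exp_bound (x := I * u) (by simpa using hu) (n := 3) three_pos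
  norm_num [Finset.sum_range_succ, ← sub_sub, mul_pow, neg_div, sub_neg_eq_add] at h
  nlinarith [pow_nonneg (abs_nonneg u) 3]

section Pointwise

variable {t v M : ℝ} {m : ℂ}

lemma norm_exp_I_mul_mul_sub_one_sub_mul_le (hm : ‖m‖ ≤ M) :
    ‖(cexp (I * t * v) - 1 - I * t * v) * m‖ ≤ 2 * M * |t| * |v| := by
  have hu : I * t * v = I * ↑(t * v) := by push_cast; ring
  rw [hu, norm_mul]
  calc _ ≤ 2 * |t * v| * M :=
        mul_le_mul (norm_exp_I_mul_sub_one_sub_le_two_mul_abs _) hm (norm_nonneg _) (by positivity)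
    _ = 2 * M * |t| * |v| := by rw [abs_mul]; ring

lemma norm_exp_I_mul_mul_sub_one_sub_mul_add_le (hm : ‖m‖ ≤ M) (htv : |t * v| ≤ 1) :
    ‖(cexp (I * t * v) - 1 - I * t * v) * m + (t : ℂ) ^ 2 / 2 * ((v : ℂ) ^ 2 * m)‖ ≤
      3 / 2 * M * t ^ 2 * v ^ 2 := by
  have hu : I * t * v = I * ↑(t * v) := by push_cast; ring
  have hsq : ‖(t : ℂ) ^ 2 / 2 * ((v : ℂ) ^ 2 * m)‖ = t ^ 2 / 2 * (v ^ 2 * ‖m‖) := by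
    simp [sq_abs]
  calc _ ≤ ‖(cexp (I * t * v) - 1 - I * t * v) * m‖ + ‖(t : ℂ) ^ 2 / 2 * ((v : ℂ) ^ 2 * m)‖ :=
        norm_add_le _ _
    _ ≤ (t * v) ^ 2 * M + t ^ 2 / 2 * (v ^ 2 * M) := by
      rw [hu, norm_mul, hsq]
      gcongr
      exact norm_exp_I_mul_sub_one_sub_le_sq htv
    _ = 3 / 2 * M * t ^ 2 * v ^ 2 := by ring

lemma norm_exp_I_mul_mul_sub_one_sub_mul_add_le_of_abs_le {a : ℝ} (hm : ‖m‖ ≤ M)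
    (htv : |t * v| ≤ a) (ha : a ≤ 1) :
    ‖(cexp (I * t * v) - 1 - I * t * v) * m + (t : ℂ) ^ 2 / 2 * ((v : ℂ) ^ 2 * m)‖ ≤
      a * M * t ^ 2 * v ^ 2 := by
  have hM : 0 ≤ M := (norm_nonneg _).trans hm
  have hu : I * t * v = I * ↑(t * v) := by push_cast; ring
  have hψ : (cexp (I * t * v) - 1 - I * t * v) * m + (t : ℂ) ^ 2 / 2 * ((v : ℂ) ^ 2 * m) =
      (cexp (I * ↑(t * v)) - 1 - I * ↑(t * v) + ↑(t * v) ^ 2 / 2) * m := by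
    rw [hu]; push_cast; ring
  rw [hψ, norm_mul]
  calc _ ≤ |t * v| ^ 3 * M :=
        mul_le_mul (norm_exp_I_mul_sub_one_sub_add_sq_le (htv.trans ha)) hm (norm_nonneg _)
          (by positivity)
    _ = (t * v) ^ 2 * |t * v| * M := by rw [pow_succ, sq_abs]
    _ ≤ (t * v) ^ 2 * a * M := by gcongr
    _ = a * M * t ^ 2 * v ^ 2 := by ring

end Pointwise

lemma integral_add_setIntegral_eq {α E : Type*} [MeasurableSpace α] {μ : Measure α}
    [NormedAddCommGroup E] [NormedSpace ℝ E] {f h : α → E} {S : Set α} (hS : MeasurableSet S)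
    (hf : Integrable f μ) (hh : IntegrableOn h S μ) :
    (∫ z, f z ∂μ) + ∫ z in S, h z ∂μ = (∫ z in S, f z + h z ∂μ) + ∫ z in Sᶜ, f z ∂μ := by
  rw [integral_add hf.integrableOn hh, ← integral_add_compl hS hf]
  abel

variable {Δ : Type*} [MeasurableSpace Δ] {μ : Measure Δ} [IsFiniteMeasure μ] {g : Δ → ℝ}

lemma norm_setIntegral_le_of_norm_le_mul_sq {E : Type*} [NormedAddCommGroup E] [NormedSpace ℝ E]
    (hg : Measurable g) {S : Set Δ} (hS : MeasurableSet S) {x : ℝ} (hSx : S ⊆ {z | |g z| ≤ x})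
    {F : Δ → E} {c : ℝ} (hF : ∀ z ∈ S, ‖F z‖ ≤ c * g z ^ 2) :
    ‖∫ z in S, F z ∂μ‖ ≤ c * ∫ z in S, g z ^ 2 ∂μ :=
  (norm_integral_le_of_norm_le ((integrableOn_sq_of_subset_abs_le hg hSx).const_mul c)
    (ae_restrict_of_forall_mem hS hF)).trans_eq (integral_const_mul c _)

variable {w : Δ → ℂ} {M t : ℝ}

lemma norm_setIntegral_exp_remainder_le (hg : Measurable g) (hw : Measurable w)
    (hM : ∀ z, ‖w z‖ ≤ M) (ht : t ≠ 0) {a : ℝ} (ha : a ≤ 1) :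
    ‖∫ z in {y | |g y| ≤ 1 / |t|},
        (cexp (I * t * g z) - 1 - I * t * g z) * w z + (t : ℂ) ^ 2 / 2 * ((g z : ℂ) ^ 2 * w z) ∂μ‖ ≤
      a * M * t ^ 2 * truncSecondMoment μ g (a / |t|) + 3 / 2 * M * t ^ 2 *
        (truncSecondMoment μ g (1 / |t|) - truncSecondMoment μ g (a / |t|)) := by
  have ht' : 0 < |t| := abs_pos.mpr ht
  have hmeas (x : ℝ) : MeasurableSet {y | |g y| ≤ x} := measurableSet_le hg.abs measurable_const
  have habs_le {x : ℝ} {z : Δ} (hz : |g z| ≤ x / |t|) : |t * g z| ≤ x := by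
    rw [abs_mul]; rwa [le_div_iff₀' ht'] at hz
  have hle : a / |t| ≤ 1 / |t| := div_le_div_of_nonneg_right ha ht'.le
  set S := {y | |g y| ≤ 1 / |t|}
  set S₀ := {y | |g y| ≤ a / |t|}
  have hψ_le (z : Δ) (hz : z ∈ S) := norm_exp_I_mul_mul_sub_one_sub_mul_add_le (hM z) (habs_le hz)
  have hψ_int : IntegrableOn (fun z =>
      (cexp (I * t * g z) - 1 - I * t * g z) * w z + (t : ℂ) ^ 2 / 2 * ((g z : ℂ) ^ 2 * w z)) S μ :=
    ((integrableOn_sq_of_subset_abs_le hg subset_rfl).const_mul _).mono' (by fun_prop)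
      (ae_restrict_of_forall_mem (hmeas _) hψ_le)
  rw [← integral_inter_add_sdiff (hmeas (a / |t|)) hψ_int,
    inter_eq_right.mpr fun z hz => hz.trans hle, truncSecondMoment_sub hg hle]
  refine norm_add_le_of_le ?_ ?_
  · exact norm_setIntegral_le_of_norm_le_mul_sq hg (hmeas _) subset_rfl fun z hz =>
      norm_exp_I_mul_mul_sub_one_sub_mul_add_le_of_abs_le (hM z) (habs_le hz) ha
  · exact norm_setIntegral_le_of_norm_le_mul_sq hg ((hmeas _).diff (hmeas _)) sdiff_subset
      fun z hz => hψ_le z hz.1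

lemma norm_integral_exp_remainder_le (hg : Measurable g) (hgi : Integrable g μ)
    (hw : Measurable w) (hM : ∀ z, ‖w z‖ ≤ M) (ht : t ≠ 0) {a : ℝ} (ha : a ≤ 1) :
    ‖(∫ z, (cexp (I * t * g z) - 1 - I * t * g z) * w z ∂μ) +
        ((t : ℂ) ^ 2 / 2) * ∫ z in {y | |g y| ≤ 1 / |t|}, (g z : ℂ) ^ 2 * w z ∂μ‖ ≤
      a * M * t ^ 2 * truncSecondMoment μ g (a / |t|) +
        3 / 2 * M * t ^ 2 * (truncSecondMoment μ g (1 / |t|) - truncSecondMoment μ g (a / |t|)) +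
        2 * M * |t| * ∫ z in {y | 1 / |t| < |g y|}, |g z| ∂μ := by
  have hmeas : MeasurableSet {y | |g y| ≤ 1 / |t|} := measurableSet_le hg.abs measurable_const
  have hφ_le (z : Δ) := norm_exp_I_mul_mul_sub_one_sub_mul_le (t := t) (v := g z) (hM z)
  have hφ_int : Integrable (fun z => (cexp (I * t * g z) - 1 - I * t * g z) * w z) μ :=
    (hgi.abs.const_mul _).mono' (by fun_prop) (ae_of_all _ hφ_le)
  have hsq_int : IntegrableOn (fun z => (g z : ℂ) ^ 2 * w z) {y | |g y| ≤ 1 / |t|} μ := by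
    refine Measure.integrableOn_of_bounded (M := (1 / |t|) ^ 2 * M) (measure_ne_top μ _)
      (by fun_prop) (ae_restrict_of_forall_mem hmeas fun z hz => ?_)
    rw [norm_mul, norm_pow, Complex.norm_real, Real.norm_eq_abs]
    exact mul_le_mul (pow_le_pow_left₀ (abs_nonneg _) hz 2) (hM z) (norm_nonneg _) (by positivity)
  have hcompl : {y | |g y| ≤ 1 / |t|}ᶜ = {y | 1 / |t| < |g y|} := by ext; simp
  rw [← integral_const_mul, integral_add_setIntegral_eq hmeas hφ_int (hsq_int.const_mul _), hcompl]
  refine norm_add_le_of_le (norm_setIntegral_exp_remainder_le hg hw hM ht ha) ?_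
  exact (norm_integral_le_of_norm_le (hgi.abs.integrableOn.const_mul _)
    (ae_of_all _ hφ_le)).trans_eq (integral_const_mul _ _)

lemma norm_integral_exp_remainder_le_of_doubling (hg : Measurable g) (hgi : Integrable g μ)
    (hw : Measurable w) (hM : ∀ z, ‖w z‖ ≤ M) (hM₀ : 0 ≤ M) (ht : t ≠ 0) {a η : ℝ}
    (ha₀ : 0 ≤ a) (ha₁ : a ≤ 1) (hη₀ : 0 ≤ η) (hη₁ : η ≤ 1 / 2)
    (hdouble : ∀ y, 1 / |t| ≤ y →
      truncSecondMoment μ g (2 * y) ≤ (1 + η) * truncSecondMoment μ g y)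
    (hstep : truncSecondMoment μ g (1 / |t|) ≤ (1 + η) * truncSecondMoment μ g (a / |t|)) :
    ‖(∫ z, (cexp (I * t * g z) - 1 - I * t * g z) * w z ∂μ) +
        ((t : ℂ) ^ 2 / 2) * ∫ z in {y | |g y| ≤ 1 / |t|}, (g z : ℂ) ^ 2 * w z ∂μ‖ ≤
      (a + 10 * η) * M * t ^ 2 * truncSecondMoment μ g (1 / |t|) := by
  set T := truncSecondMoment μ g
  have ht' : 0 < |t| := abs_pos.mpr ht
  have hT₁ : 0 ≤ T (1 / |t|) := truncSecondMoment_nonneg _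
  have hmono : T (a / |t|) ≤ T (1 / |t|) :=
    truncSecondMoment_mono hg (div_le_div_of_nonneg_right ha₁ ht'.le)
  have htail : ∫ z in {y | 1 / |t| < |g y|}, |g z| ∂μ ≤ 4 * η * T (1 / |t|) * |t| := by
    have h := setIntegral_abs_le_of_setLIntegral_enorm_le hgi (by positivity)
      (lintegral_enorm_tail_le_of_doubling hg (by positivity) hη₀ hη₁ hdouble)
    rwa [div_div_eq_mul_div, div_one] at h
  calc _ ≤ _ := norm_integral_exp_remainder_le hg hgi hw hM ht ha₁
    _ ≤ a * M * t ^ 2 * T (1 / |t|) + 3 / 2 * M * t ^ 2 * (η * T (1 / |t|)) +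
        2 * M * |t| * (4 * η * T (1 / |t|) * |t|) := by
      have hjump : T (1 / |t|) - T (a / |t|) ≤ η * T (1 / |t|) := by
        nlinarith [mul_le_mul_of_nonneg_left hmono hη₀]
      have haMt : 0 ≤ a * M * t ^ 2 := by positivity
      gcongr
    _ = (a + 3 / 2 * η + 8 * η) * M * t ^ 2 * T (1 / |t|) := by
      rw [← sq_abs t]; ring
    _ ≤ (a + 10 * η) * M * t ^ 2 * T (1 / |t|) := by
      have hcoef : a + 3 / 2 * η + 8 * η ≤ a + 10 * η := by linarith
      gcongr

end ExpRemainder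

lemma SlowlyVarying.eventually_le_mul {L : ℝ → ℝ} (hL : SlowlyVarying L)
    (hpos : ∀ᶠ x in atTop, 0 < L x) {lam η : ℝ} (hlam : 0 < lam) (hη : 0 < η) :
    ∀ᶠ x in atTop, L (lam * x) ≤ (1 + η) * L x := by
  filter_upwards [(hL lam hlam).eventually_le_const (by linarith : (1 : ℝ) < 1 + η), hpos]
    with x hx hx₀
  rwa [div_le_iff₀ hx₀] at hx

/-- Lemma of Aaronson and Denker (`lem_aaronson_denker`): if the distribution of `g` is in
the nonstandard domain of attraction of `N(0,1)` (i.e. `L(x) = ∫ 1_{|g|≤x} g²` is unbounded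
and slowly varying), then uniformly over bounded measurable `w`,
`∫ (e^{itg} - 1 - itg) w = -(t²/2) ∫ 1_{|g|≤1/|t|} g² w + ‖w‖_∞ o(t² L(1/|t|))` as `t → 0`. -/
theorem aaronson_denker_lemma
    {Δ : Type*} [MeasurableSpace Δ] (μ : Measure Δ) (hμ : IsProbabilityMeasure μ)
    (g : Δ → ℝ) (hg : Measurable g)
    (L : ℝ → ℝ) (hL_def : ∀ x : ℝ, L x = ∫ y in {y : Δ | |g y| ≤ x}, (g y) ^ 2 ∂μ)
    (hL_unbdd : ∀ M : ℝ, ∃ x : ℝ, M < L x)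
    (hL_sv : SlowlyVarying L) :
    ∀ ε : ℝ, 0 < ε → ∃ δ : ℝ, 0 < δ ∧ ∀ t : ℝ, 0 < |t| → |t| < δ →
      ∀ w : Δ → ℂ, Measurable w → ∀ M : ℝ, (∀ x, ‖w x‖ ≤ M) →
      ‖(∫ x, (Complex.exp (Complex.I * t * g x) - 1 - Complex.I * t * g x) * w x ∂μ) +
          ((t : ℂ) ^ 2 / 2) * ∫ x in {y : Δ | |g y| ≤ 1 / |t|}, (g x : ℂ) ^ 2 * w x ∂μ‖
        ≤ ε * M * t ^ 2 * L (1 / |t|) := by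
  intro ε hε
  obtain rfl : L = truncSecondMoment μ g := funext hL_def
  obtain ⟨x₁, hx₁⟩ := hL_unbdd 0
  have hpos : ∀ᶠ x in atTop, 0 < truncSecondMoment μ g x :=
    (eventually_ge_atTop x₁).mono fun x hx => hx₁.trans_le (truncSecondMoment_mono hg hx)
  set a := min 1 (ε / 2)
  set η := min (1 / 2) (ε / 20)
  have ha₀ : 0 < a := lt_min one_pos (by positivity)
  have hη₀ : 0 < η := lt_min one_half_pos (by positivity)
  obtain ⟨x₀, hx₀⟩ := eventually_atTop.mp <| (hL_sv.eventually_le_mul hpos two_pos hη₀).and <|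
    (hL_sv.eventually_le_mul hpos (inv_pos.mpr ha₀) hη₀).and (eventually_gt_atTop 0)
  have hdouble (y : ℝ) (hy : x₀ ≤ y) := (hx₀ y hy).1
  have hx₀_pos : 0 < x₀ := (hx₀ x₀ le_rfl).2.2
  have hgi : Integrable g μ := integrable_of_lintegral_enorm_tail_ne_top hg <|
    ne_top_of_le_ne_top ENNReal.ofReal_ne_top <| lintegral_enorm_tail_le_of_doubling hg
      hx₀_pos hη₀.le (min_le_left _ _) hdouble
  refine ⟨a / x₀, div_pos ha₀ hx₀_pos, fun t ht htδ w hw M hM => ?_⟩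
  have hM₀ : 0 ≤ M := (norm_nonneg _).trans (hM (nonempty_of_isProbabilityMeasure μ).some)
  have hx₀t : x₀ ≤ a / |t| := by
    rw [le_div_iff₀ ht]; rw [lt_div_iff₀ hx₀_pos] at htδ; linarith
  have hat : a / |t| ≤ 1 / |t| := div_le_div_of_nonneg_right (min_le_left _ _) ht.le
  have hstep := (hx₀ (a / |t|) hx₀t).2.1
  rw [inv_mul_eq_div, div_div_cancel_left' ha₀.ne', ← one_div] at hstep
  calc _ ≤ (a + 10 * η) * M * t ^ 2 * truncSecondMoment μ g (1 / |t|) :=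
        norm_integral_exp_remainder_le_of_doubling hg hgi hw hM hM₀ (abs_pos.mp ht) ha₀.le
          (min_le_left _ _) hη₀.le (min_le_left _ _)
          (fun y hy => hdouble y (hx₀t.trans (hat.trans hy))) hstep
    _ ≤ ε * M * t ^ 2 * truncSecondMoment μ g (1 / |t|) := by
      have hε' : a + 10 * η ≤ ε := by
        linarith [min_le_right 1 (ε / 2), min_le_right (1 / 2) (ε / 20)]
      have hT : 0 ≤ truncSecondMoment μ g (1 / |t|) := truncSecondMoment_nonneg _
      gcongr
end

section
/- Let U : Δ → Δ be an expanding Young tower with μ(Δ_n) ≤ C·ρⁿ for some ρ < 1, let τ < 1, and let ε > 0 satisfy e^{ε}·ρ < 1. For x ∈ Δ let ω(x) be its height and let Ψ_n(x) be the number of indices 1 ≤ k ≤ n with U^k x ∈ Δ₀ (the number of returns to the basis between time 1 and n). Then there exist C' > 0 and θ < 1 such that for every n ∈ ℕ, ∫_{U^{−n}Δ₀} τ^{Ψ_n}·e^{ε·ω} dμ ≤ C'·θⁿ. -/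
open MeasureTheory Filter Set
open scoped ENNReal NNReal Topology Classical

/-- An expanding Young tower on a probability space `(Δ, μ)`, for the map `U`. -/
structure YoungTower {Δ : Type*} [MeasurableSpace Δ] (μ : Measure Δ) (U : Δ → Δ) where
  /-- the height of column `p` -/
  r : ℕ → ℕ
  r_pos : ∀ p, 0 < r p
  /-- `cell k p` is the element `Δ_{k,p}` of the partition -/
  cell : ℕ → ℕ → Set Δ
  cell_meas : ∀ k p, MeasurableSet (cell k p)
  cell_empty : ∀ k p, r p ≤ k → cell k p = ∅
  cell_cover : ∀ x : Δ, ∃ p k, k < r p ∧ x ∈ cell k p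
  cell_disj : ∀ k p k' p', (k, p) ≠ (k', p') → Disjoint (cell k p) (cell k' p')
  measurable_U : Measurable U
  measurePreserving_U : MeasurePreserving U μ μ
  isProb : IsProbabilityMeasure μ
  /-- `U` is a measurable isomorphism from `Δ_{k,p}` onto `Δ_{k+1,p}` when `k < r p - 1`... -/
  map_up : ∀ p k, k + 1 < r p → Set.BijOn U (cell k p) (cell (k + 1) p)
  /-- ... which is measure preserving -/
  map_up_measure : ∀ p k, k + 1 < r p → ∀ A : Set Δ, A ⊆ cell k p → MeasurableSet A →
      μ (U '' A) = μ A
  /-- `U` is a measurable isomorphism from `Δ_{r_p - 1, p}` onto the basis `⋃ m, Δ_{0,m}` -/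
  map_top : ∀ p, Set.BijOn U (cell (r p - 1) p) (⋃ m, cell 0 m)
  /-- the height function `ω` -/
  height : Δ → ℕ
  height_spec : ∀ k p, ∀ x ∈ cell k p, height x = k
  /-- the projection `π₀` to the basis -/
  proj : Δ → Δ
  proj_spec : ∀ k p, ∀ x ∈ cell k p, proj x ∈ cell 0 p ∧ U^[k] (proj x) = x
  /-- the separation time -/
  s : Δ → Δ → ℕ
  s_eq_zero : ∀ x y : Δ, (¬ ∃ p k, k < r p ∧ x ∈ cell k p ∧ y ∈ cell k p) → s x y = 0
  s_mid : ∀ p k, k + 1 < r p → ∀ x ∈ cell k p, ∀ y ∈ cell k p, s x y = s (U x) (U y)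
  s_top : ∀ p, ∀ x ∈ cell (r p - 1) p, ∀ y ∈ cell (r p - 1) p, s x y = 1 + s (U x) (U y)
  /-- the inverse of the Jacobian of `U` -/
  J : Δ → ℝ
  J_meas : Measurable J
  J_pos : ∀ x, 0 < J x
  J_spec : ∀ k p, ∀ A : Set Δ, A ⊆ cell k p → MeasurableSet A →
      μ (U '' A) = ∫⁻ x in A, ENNReal.ofReal (J x)⁻¹ ∂μ
  /-- distortion constants -/
  Cd : ℝ
  β : ℝ
  Cd_pos : 0 < Cd
  β_pos : 0 < β
  β_lt_one : β < 1
  distortion : ∀ k p, ∀ x ∈ cell k p, ∀ y ∈ cell k p,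
      |1 - J x / J y| ≤ Cd * β ^ (s (U x) (U y))

namespace YoungTower

variable {Δ : Type*} [MeasurableSpace Δ] {μ : Measure Δ} {U : Δ → Δ}

/-- The basis `Δ₀` of the tower. -/
def base (T : YoungTower μ U) : Set Δ := ⋃ m, T.cell 0 m

/-- The set `Δ_n` of points at height `n`. -/
def level (T : YoungTower μ U) (n : ℕ) : Set Δ := ⋃ p, T.cell n p

/-- Exponentially small tails: `μ (Δ_n) ≤ C ρ^n`. -/
def ExpTails (T : YoungTower μ U) (C ρ : ℝ) : Prop :=
  ∀ n : ℕ, μ (T.level n) ≤ ENNReal.ofReal (C * ρ ^ n)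

/-- `x` and `y` lie in the same element of the partition. -/
def SameCell (T : YoungTower μ U) (x y : Δ) : Prop :=
  ∃ p k, k < T.r p ∧ x ∈ T.cell k p ∧ y ∈ T.cell k p

/-- A function is locally Hölder (with constants `Cg`, `τ`) if
`|g x - g y| ≤ Cg τ^(s x y)` for `x, y` in the same partition element. -/
def LocallyHolder (T : YoungTower μ U) (g : Δ → ℝ) (Cg τ : ℝ) : Prop :=
  ∀ x y : Δ, T.SameCell x y → |g x - g y| ≤ Cg * τ ^ (T.s x y)

/-- The first return time to the basis. -/
noncomputable def retTime (T : YoungTower μ U) (x : Δ) : ℕ :=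
  sInf {n : ℕ | 0 < n ∧ U^[n] x ∈ T.base}

/-- The induced (first return) map on the basis. -/
noncomputable def retMap (T : YoungTower μ U) (x : Δ) : Δ := U^[T.retTime x] x

/-- `Ψ_n x`: the number of returns of `x` to the basis between times `1` and `n`. -/
noncomputable def retCount (T : YoungTower μ U) (n : ℕ) (x : Δ) : ℕ :=
  ((Finset.Icc 1 n).filter fun k => U^[k] x ∈ T.base).card

/-- `G x = ∑_{j=0}^{ω(x)-1} g (U^j (π₀ x))`. -/
noncomputable def towerSum (T : YoungTower μ U) (g : Δ → ℝ) (x : Δ) : ℝ :=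
  ∑ j ∈ Finset.range (T.height x), g (U^[j] (T.proj x))

/-- The transfer operator `Û u (x) = ∑_{U y = x} J y · u y`. -/
noncomputable def transfer (T : YoungTower μ U) (u : Δ → ℂ) (x : Δ) : ℂ :=
  ∑' y : {y : Δ // U y = x}, (T.J y.1 : ℂ) * u y.1

/-- The perturbed transfer operator `Û_t u = Û (e^{itg} u)`. -/
noncomputable def transferPert (T : YoungTower μ U) (g : Δ → ℝ) (t : ℝ) (u : Δ → ℂ) :
    Δ → ℂ :=
  T.transfer fun y => Complex.exp (Complex.I * t * g y) * u y

/-- The weighted sup norm `‖u‖_m`. -/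
noncomputable def normM (T : YoungTower μ U) (ε : ℝ) (u : Δ → ℂ) : ℝ≥0∞ :=
  sInf {C : ℝ≥0∞ | ∀ n : ℕ, ∀ᵐ x ∂μ, x ∈ T.level n →
    (‖u x‖₊ : ℝ≥0∞) ≤ C * ENNReal.ofReal (Real.exp (ε * n))}

/-- The weighted Hölder seminorm `‖u‖_l`. -/
noncomputable def normL (T : YoungTower μ U) (ε τ : ℝ) (u : Δ → ℂ) : ℝ≥0∞ :=
  sInf {C : ℝ≥0∞ | ∀ n : ℕ, ∀ᵐ x ∂μ, ∀ᵐ y ∂μ,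
    (x ∈ T.level n ∧ T.SameCell x y) →
    (‖u x - u y‖₊ : ℝ≥0∞) ≤ C * ENNReal.ofReal (Real.exp (ε * n) * τ ^ (T.s x y))}

/-- The norm `‖u‖ = ‖u‖_m + ‖u‖_l` of the Banach space `H`. -/
noncomputable def normH (T : YoungTower μ U) (ε τ : ℝ) (u : Δ → ℂ) : ℝ≥0∞ :=
  T.normM ε u + T.normL ε τ u

/-- Membership in the Banach space `H`. -/
def MemH (T : YoungTower μ U) (ε τ : ℝ) (u : Δ → ℂ) : Prop :=
  Measurable u ∧ T.normH ε τ u < ⊤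

end YoungTower

/-!
Write `u_n = 1_{U^{-n} Δ₀} τ^{Ψ_n}` (`returnWeight`). A point of the floor `Δ_{k,p}` first
reaches the basis after `r_p - k` steps, and `U^{r_p - k}` carries `μ` on that floor to the
measure `λ_p` (`exitMeasure p`), the image of the top floor of column `p`. These measures add
up to `μ` on `Δ₀` exactly, and bounded distortion gives
`λ_p ≤ (1 + C_d)² μ(Δ_{0,p}) / μ(Δ₀) · μ|Δ₀`. Hence for `z > 1` the truncated generating
functions `S = ∑_{m ≤ N} z^m u_m` satisfy the renewal inequality `∫_{Δ₀} S ≤ 1 + τ b ∫_{Δ₀} S`,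
where `∑_p z^{r_p} λ_p ≤ b μ|Δ₀` and, by the exponential tails, `b = 1 + O(z - 1)`. Choosing
`z` close to `1` makes `τ b < 1`, so `∫_{Δ₀} u_m = O(z^{-m})`. Finally, split the integral over
the floors: on `Δ_{k,p}` the weight `e^{εk}` and the loss `z^{r_p - k}` of the first excursion
are paid by `e^{ε r_p}`, and `∑_p r_p e^{ε r_p} μ(Δ_{0,p}) < ∞` because `e^ε ρ < 1`. This gives
the bound with `θ = 1/z`.
-/

theorem one_add_pow_le_one_add_mul_mul_pow {R : Type*} [CommSemiring R] [PartialOrder R]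
    [IsOrderedRing R] {d : R} (hd : 0 ≤ d) (n : ℕ) :
    (1 + d) ^ n ≤ 1 + n * d * (1 + d) ^ n := by
  induction n with
  | zero => simp
  | succ n ih =>
    have hmono : (1 + d) ^ n ≤ (1 + d) ^ (n + 1) :=
      pow_le_pow_right₀ (le_add_of_nonneg_right hd) n.le_succ
    calc (1 + d) ^ (n + 1) = (1 + d) ^ n + d * (1 + d) ^ n := by ring
      _ ≤ 1 + n * d * (1 + d) ^ n + d * (1 + d) ^ n := by gcongr
      _ = 1 + (n + 1) * d * (1 + d) ^ n := by ring
      _ ≤ 1 + (n + 1 : ℕ) * d * (1 + d) ^ (n + 1) := by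
        push_cast
        have : 0 ≤ ((n : R) + 1) * d := mul_nonneg (add_nonneg n.cast_nonneg zero_le_one) hd
        gcongr

namespace ENNReal

theorem le_inv_one_sub_of_le_one_add_mul {h c : ℝ≥0∞} (hh : h ≠ ⊤) (H : h ≤ 1 + c * h) :
    h ≤ (1 - c)⁻¹ := by
  rw [ENNReal.le_inv_iff_mul_le, ENNReal.mul_sub fun _ _ => hh, mul_one, tsub_le_iff_right,
    mul_comm]
  exact H

theorem exists_pos_one_add_le_and_mul_one_add_mul_lt {t B e : ℝ≥0∞} (ht : t < 1) (hB : B ≠ ⊤)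
    (he : 1 < e) : ∃ d : ℝ≥0∞, 0 < d ∧ d ≠ ⊤ ∧ 1 + d ≤ e ∧ t * (1 + d * B) < 1 := by
  have hlim₁ : Tendsto (fun d : ℝ≥0∞ => 1 + d) (𝓝 0) (𝓝 1) :=
    (continuous_const.add continuous_id).tendsto' (0 : ℝ≥0∞) 1 (add_zero 1)
  have hlim₂ : Tendsto (fun d : ℝ≥0∞ => t * (1 + d * B)) (𝓝 0) (𝓝 t) :=
    ((ENNReal.continuous_const_mul ht.ne_top).comp
      (continuous_const.add (ENNReal.continuous_mul_const hB))).tendsto' 0 t (by simp)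
  have hev : ∀ᶠ d in 𝓝 0, 1 + d < e ∧ t * (1 + d * B) < 1 :=
    (hlim₁.eventually (gt_mem_nhds he)).and (hlim₂.eventually (gt_mem_nhds ht))
  obtain ⟨n, ⟨hne, hnt⟩, hn⟩ :=
    ((ENNReal.tendsto_inv_nat_nhds_zero.eventually hev).and (eventually_ge_atTop 1)).exists
  exact ⟨(n : ℝ≥0∞)⁻¹, ENNReal.inv_pos.2 (natCast_ne_top n),
    ENNReal.inv_ne_top.2 (by exact_mod_cast (Nat.one_le_iff_ne_zero.1 hn)), hne.le, hnt⟩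

theorem inv_pow_tsub_le {z : ℝ≥0∞} (hz : 1 ≤ z) (hz' : z ≠ ⊤) (n j : ℕ) :
    z⁻¹ ^ (n - j) ≤ z⁻¹ ^ n * z ^ j := by
  have hsplit : n = (n - j) + (n - (n - j)) := by omega
  calc z⁻¹ ^ (n - j) = z⁻¹ ^ (n - j) * (z⁻¹ ^ (n - (n - j)) * z ^ (n - (n - j))) := by
        rw [← mul_pow, ENNReal.inv_mul_cancel (zero_lt_one.trans_le hz).ne' hz', one_pow, mul_one]
    _ = z⁻¹ ^ n * z ^ (n - (n - j)) := by rw [← mul_assoc, ← pow_add, ← hsplit]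
    _ ≤ z⁻¹ ^ n * z ^ j := by gcongr; omega

end ENNReal

namespace YoungTower

variable {Δ : Type*} [MeasurableSpace Δ] {μ : Measure Δ} {U : Δ → Δ} (T : YoungTower μ U)

lemma measurableSet_base : MeasurableSet T.base :=
  MeasurableSet.iUnion fun m => T.cell_meas 0 m

lemma cell_zero_subset_base (p : ℕ) : T.cell 0 p ⊆ T.base :=
  subset_iUnion (fun m => T.cell 0 m) p

lemma measurable_iterate (T : YoungTower μ U) (n : ℕ) : Measurable U^[n] :=
  T.measurable_U.iterate n

lemma iterate_mem_cell {k p i : ℕ} {x : Δ} (hx : x ∈ T.cell k p) (hi : k + i < T.r p) :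
    U^[i] x ∈ T.cell (k + i) p := by
  induction i with
  | zero => simpa using hx
  | succ i ih =>
    rw [Function.iterate_succ_apply', ← add_assoc]
    exact (T.map_up p (k + i) (by omega)).mapsTo (ih (by omega))

lemma iterate_mem_base {k p : ℕ} {x : Δ} (hx : x ∈ T.cell k p) (hk : k < T.r p) :
    U^[T.r p - k] x ∈ T.base := by
  obtain ⟨i, hi⟩ : ∃ i, T.r p - k = i + 1 := ⟨T.r p - k - 1, by omega⟩
  have htop := T.iterate_mem_cell hx (i := i) (by omega)
  rw [show k + i = T.r p - 1 by omega] at htop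
  rw [hi, Function.iterate_succ_apply']
  exact (T.map_top p).mapsTo htop

lemma notMem_base_of_mem_cell {k p : ℕ} (hk : k ≠ 0) {x : Δ} (hx : x ∈ T.cell k p) :
    x ∉ T.base := fun hb => by
  obtain ⟨m, hm⟩ := mem_iUnion.1 hb
  exact (T.cell_disj k p 0 m (by simp [hk])).le_bot ⟨hx, hm⟩

lemma iterate_notMem_base {k p i : ℕ} {x : Δ} (hx : x ∈ T.cell k p) (hi : 0 < i)
    (hki : k + i < T.r p) : U^[i] x ∉ T.base :=
  T.notMem_base_of_mem_cell (by omega) (T.iterate_mem_cell hx hki)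

lemma preimage_base_eq_iUnion_top : U ⁻¹' T.base = ⋃ p, T.cell (T.r p - 1) p := by
  ext x
  obtain ⟨p, k, hk, hx⟩ := T.cell_cover x
  simp only [mem_preimage, mem_iUnion]
  refine ⟨fun hUx => ⟨p, ?_⟩, fun ⟨q, hq⟩ => (T.map_top q).mapsTo hq⟩
  obtain rfl : k = T.r p - 1 := by
    by_contra hne
    exact T.notMem_base_of_mem_cell (k := k + 1) (by omega)
      ((T.map_up p k (by omega)).mapsTo hx) hUx
  exact hx

lemma map_restrict_cell {k p : ℕ} (h : k + 1 < T.r p) :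
    (μ.restrict (T.cell k p)).map U = μ.restrict (T.cell (k + 1) p) := by
  ext E hE
  have hpre : MeasurableSet (U ⁻¹' E ∩ T.cell k p) :=
    (hE.preimage T.measurable_U).inter (T.cell_meas k p)
  rw [Measure.map_apply T.measurable_U hE, Measure.restrict_apply (hE.preimage T.measurable_U),
    Measure.restrict_apply hE, ← T.map_up_measure p k h _ inter_subset_right hpre,
    image_preimage_inter, (T.map_up p k h).image_eq]

lemma map_iterate_restrict_cell {k p i : ℕ} (h : k + i < T.r p) :
    (μ.restrict (T.cell k p)).map U^[i] = μ.restrict (T.cell (k + i) p) := by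
  induction i with
  | zero => simp
  | succ i ih =>
    rw [Function.iterate_succ', ← Measure.map_map T.measurable_U (T.measurable_iterate i),
      ih (by omega), ← add_assoc]
    exact T.map_restrict_cell (by omega)

lemma measure_cell {k p : ℕ} (hk : k < T.r p) : μ (T.cell k p) = μ (T.cell 0 p) := by
  have h := congrArg (· univ) (T.map_iterate_restrict_cell (μ := μ) (k := 0) (p := p) (i := k)
    (by omega))
  simpa [Measure.map_apply (T.measurable_iterate k) MeasurableSet.univ] using h.symm

lemma measure_level (n : ℕ) : μ (T.level n) = ∑' p, μ (T.cell n p) :=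
  measure_iUnion (fun p q hpq => T.cell_disj n p n q (by simp [hpq])) fun p => T.cell_meas n p

lemma measure_base_ne_zero : μ T.base ≠ 0 := by
  have := T.isProb
  intro h0
  have hcover : ⋃ j, U^[j] ⁻¹' T.base = univ := eq_univ_of_forall fun x => by
    obtain ⟨p, k, hk, hx⟩ := T.cell_cover x
    exact mem_iUnion.2 ⟨_, T.iterate_mem_base hx hk⟩
  have huniv : μ univ = 0 := by
    rw [← hcover]
    exact measure_iUnion_null fun j => ((T.measurePreserving_U.iterate j).measure_preimage
      T.measurableSet_base.nullMeasurableSet).trans h0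
  simp at huniv

lemma measure_base_ne_top : μ T.base ≠ ⊤ := by
  have := T.isProb
  exact measure_ne_top μ _

lemma lintegral_eq_tsum_sum_cell (f : Δ → ℝ≥0∞) :
    ∫⁻ x, f x ∂μ = ∑' p, ∑ k ∈ Finset.range (T.r p), ∫⁻ x in T.cell k p, f x ∂μ := by
  have hcover : ⋃ kp : ℕ × ℕ, T.cell kp.1 kp.2 = univ := eq_univ_of_forall fun x => by
    obtain ⟨p, k, -, hx⟩ := T.cell_cover x
    exact mem_iUnion.2 ⟨(k, p), hx⟩
  rw [← setLIntegral_univ, ← hcover, lintegral_iUnion (s := fun kp : ℕ × ℕ => T.cell kp.1 kp.2)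
    (fun kp => T.cell_meas kp.1 kp.2)
    (fun kp kq hne => T.cell_disj kp.1 kp.2 kq.1 kq.2 (by simpa using hne)),
    ENNReal.tsum_prod', ENNReal.tsum_comm]
  refine tsum_congr fun p => tsum_eq_sum fun k hk => ?_
  rw [T.cell_empty k p (by simpa using hk), Measure.restrict_empty, lintegral_zero_measure]

lemma lintegral_base_eq_tsum (f : Δ → ℝ≥0∞) :
    ∫⁻ x in T.base, f x ∂μ = ∑' p, ∫⁻ x in T.cell 0 p, f x ∂μ :=
  lintegral_iUnion (fun p => T.cell_meas 0 p)
    (fun p q hpq => T.cell_disj 0 p 0 q (by simp [hpq])) f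

noncomputable def exitMeasure (p : ℕ) : Measure Δ :=
  (μ.restrict (T.cell (T.r p - 1) p)).map U

lemma exitMeasure_apply (p : ℕ) {E : Set Δ} (hE : MeasurableSet E) :
    T.exitMeasure p E = μ (U ⁻¹' E ∩ T.cell (T.r p - 1) p) := by
  rw [exitMeasure, Measure.map_apply T.measurable_U hE,
    Measure.restrict_apply (hE.preimage T.measurable_U)]

lemma map_iterate_restrict_cell_eq_exitMeasure {k p : ℕ} (hk : k < T.r p) :
    (μ.restrict (T.cell k p)).map U^[T.r p - k] = T.exitMeasure p := by
  obtain ⟨i, hi⟩ : ∃ i, T.r p - k = i + 1 := ⟨T.r p - k - 1, by omega⟩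
  rw [hi, Function.iterate_succ', ← Measure.map_map T.measurable_U (T.measurable_iterate i),
    T.map_iterate_restrict_cell (by omega), show k + i = T.r p - 1 by omega, exitMeasure]

lemma sum_exitMeasure : Measure.sum T.exitMeasure = μ.restrict T.base := by
  ext E hE
  have hdisj : Pairwise (Function.onFun Disjoint fun p => U ⁻¹' E ∩ T.cell (T.r p - 1) p) :=
    fun p q hpq => (T.cell_disj _ p _ q (by simp [hpq])).mono inter_subset_right inter_subset_right
  rw [Measure.sum_apply _ hE, Measure.restrict_apply hE]
  simp_rw [T.exitMeasure_apply _ hE]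
  rw [← measure_iUnion hdisj fun p => (hE.preimage T.measurable_U).inter (T.cell_meas _ _),
    ← inter_iUnion, ← T.preimage_base_eq_iUnion_top, ← preimage_inter]
  exact T.measurePreserving_U.measure_preimage (hE.inter T.measurableSet_base).nullMeasurableSet

lemma ofReal_inv_J_le {k p : ℕ} {x y : Δ} (hx : x ∈ T.cell k p) (hy : y ∈ T.cell k p) :
    ENNReal.ofReal (T.J x)⁻¹ ≤ ENNReal.ofReal (1 + T.Cd) * ENNReal.ofReal (T.J y)⁻¹ := by
  have hJx := T.J_pos x
  have hJy := T.J_pos y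
  have hratio : T.J y / T.J x ≤ 1 + T.Cd := by
    have h := (T.distortion k p y hy x hx).trans
      (mul_le_of_le_one_right T.Cd_pos.le (pow_le_one₀ T.β_pos.le T.β_lt_one.le))
    linarith [(abs_le.1 h).1]
  rw [← ENNReal.ofReal_mul (by linarith [T.Cd_pos])]
  refine ENNReal.ofReal_le_ofReal ?_
  rw [div_le_iff₀ hJx] at hratio
  rw [inv_le_iff_one_le_mul₀ hJx]
  calc 1 = T.J y * (T.J y)⁻¹ := (mul_inv_cancel₀ hJy.ne').symm
    _ ≤ (1 + T.Cd) * T.J x * (T.J y)⁻¹ := by gcongr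
    _ = (1 + T.Cd) * (T.J y)⁻¹ * T.J x := by ring

lemma measure_base_inter_eq (p : ℕ) {E : Set Δ} (hE : MeasurableSet E) :
    μ (T.base ∩ E) = ∫⁻ x in T.cell (T.r p - 1) p ∩ U ⁻¹' E, ENNReal.ofReal (T.J x)⁻¹ ∂μ := by
  rw [← T.J_spec _ p _ inter_subset_left ((T.cell_meas _ _).inter (hE.preimage T.measurable_U)),
    image_inter_preimage, (T.map_top p).image_eq]
  rfl

lemma exitMeasure_mul_measure_base_le (p : ℕ) {E : Set Δ} (hE : MeasurableSet E) :
    T.exitMeasure p E * μ T.base ≤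
      ENNReal.ofReal (1 + T.Cd) ^ 2 * μ (T.cell 0 p) * μ (T.base ∩ E) := by
  set top := T.cell (T.r p - 1) p
  rcases top.eq_empty_or_nonempty with he | ⟨x₀, hx₀⟩
  · simp [T.exitMeasure_apply p hE, top, he]
  -- On the top floor, which `U` maps onto `Δ₀`, the density `1 / J` varies by a factor
  -- at most `1 + C_d`; compare it with its value at a fixed point `x₀`.
  set D := ENNReal.ofReal (1 + T.Cd)
  set j₀ := ENNReal.ofReal (T.J x₀)⁻¹
  have hmeasJ : Measurable fun x => ENNReal.ofReal (T.J x)⁻¹ :=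
    ENNReal.measurable_ofReal.comp T.J_meas.inv
  have hexit : j₀ * T.exitMeasure p E ≤ D * μ (T.base ∩ E) := by
    rw [T.exitMeasure_apply p hE, inter_comm, ← setLIntegral_const, T.measure_base_inter_eq p hE,
      ← lintegral_const_mul _ hmeasJ]
    exact setLIntegral_mono' ((T.cell_meas _ _).inter (hE.preimage T.measurable_U))
      fun x hx => T.ofReal_inv_J_le hx₀ hx.1
  have hbase : μ T.base ≤ D * j₀ * μ (T.cell 0 p) := by
    have h := T.measure_base_inter_eq p MeasurableSet.univ
    rw [inter_univ, preimage_univ, inter_univ] at h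
    rw [h, ← T.measure_cell (k := T.r p - 1) (by have := T.r_pos p; omega), ← setLIntegral_const]
    exact setLIntegral_mono' (T.cell_meas _ _) fun x hx => T.ofReal_inv_J_le hx hx₀
  calc T.exitMeasure p E * μ T.base ≤ T.exitMeasure p E * (D * j₀ * μ (T.cell 0 p)) := by
        gcongr
    _ = D * (j₀ * T.exitMeasure p E) * μ (T.cell 0 p) := by ring
    _ ≤ D * (D * μ (T.base ∩ E)) * μ (T.cell 0 p) := by gcongr
    _ = D ^ 2 * μ (T.cell 0 p) * μ (T.base ∩ E) := by ring

lemma exitMeasure_le_smul (p : ℕ) :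
    T.exitMeasure p ≤
      (ENNReal.ofReal (1 + T.Cd) ^ 2 * μ (T.cell 0 p) / μ T.base) • μ.restrict T.base := by
  refine Measure.le_iff.2 fun E hE => ?_
  rw [Measure.smul_apply, smul_eq_mul, Measure.restrict_apply hE, inter_comm, div_eq_mul_inv,
    mul_right_comm, ← div_eq_mul_inv,
    ENNReal.le_div_iff_mul_le (Or.inl T.measure_base_ne_zero) (Or.inl T.measure_base_ne_top)]
  exact T.exitMeasure_mul_measure_base_le p hE

lemma lintegral_exitMeasure_le (p : ℕ) (f : Δ → ℝ≥0∞) :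
    ∫⁻ y, f y ∂T.exitMeasure p ≤
      ENNReal.ofReal (1 + T.Cd) ^ 2 * μ (T.cell 0 p) / μ T.base * ∫⁻ y in T.base, f y ∂μ :=
  (lintegral_mono' (T.exitMeasure_le_smul p) le_rfl).trans_eq (lintegral_smul_measure _ _)

lemma tsum_mul_measure_cell_zero_le (f : ℕ → ℝ≥0∞) :
    ∑' p, f (T.r p) * μ (T.cell 0 p) ≤ ∑' n, f (n + 1) * μ (T.level n) := by
  -- Count each column through its top floor, which lies in `Δ_{r_p - 1}`.
  have htop : ∀ p, f (T.r p) * μ (T.cell 0 p) =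
      ∑' n, if n = T.r p - 1 then f (n + 1) * μ (T.cell n p) else 0 := fun p => by
    have := T.r_pos p
    rw [tsum_ite_eq, Nat.sub_add_cancel this, T.measure_cell (by omega : T.r p - 1 < T.r p)]
  simp_rw [htop, T.measure_level, ← ENNReal.tsum_mul_left]
  rw [ENNReal.tsum_comm]
  exact ENNReal.tsum_le_tsum fun n => ENNReal.tsum_le_tsum fun p => by split_ifs <;> simp

/-- The `μ`-integral of `e ^ r_p`, where `r_p` is the height of the column of the point. -/
noncomputable def columnMoment (e : ℝ≥0∞) : ℝ≥0∞ :=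
  ∑' p, (T.r p : ℝ≥0∞) * e ^ T.r p * μ (T.cell 0 p)

lemma columnMoment_ne_top {C ρ c : ℝ} (htails : T.ExpTails C ρ) (hρ : 0 ≤ ρ) (hc : 0 ≤ c)
    (hcρ : c * ρ < 1) : T.columnMoment (ENNReal.ofReal c) ≠ ⊤ := by
  have hsum : Summable fun n : ℕ => C * c * (((n : ℝ) + 1) * (c * ρ) ^ n) := by
    have hgeom : Summable fun n : ℕ => (c * ρ) ^ n :=
      summable_geometric_of_lt_one (by positivity) hcρ
    have hmul : Summable fun n : ℕ => (n : ℝ) ^ 1 * (c * ρ) ^ n :=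
      summable_pow_mul_geometric_of_norm_lt_one 1 (by rwa [Real.norm_of_nonneg (by positivity)])
    simpa [add_mul] using (hmul.add hgeom).mul_left (C * c)
  have hterm : ∀ n : ℕ, ((n + 1 : ℕ) : ℝ≥0∞) * ENNReal.ofReal c ^ (n + 1) *
      ENNReal.ofReal (C * ρ ^ n) = ENNReal.ofReal (C * c * (((n : ℝ) + 1) * (c * ρ) ^ n)) := by
    intro n
    rw [← ENNReal.ofReal_natCast, ← ENNReal.ofReal_pow hc, ← ENNReal.ofReal_mul (by positivity),
      ← ENNReal.ofReal_mul (by positivity)]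
    congr 1
    push_cast
    ring
  refine ne_top_of_le_ne_top ?_ ((T.tsum_mul_measure_cell_zero_le
    fun j => (j : ℝ≥0∞) * ENNReal.ofReal c ^ j).trans
    (ENNReal.tsum_le_tsum fun n => mul_le_mul_right (htails n) _))
  simp_rw [hterm]
  exact ENNReal.tsum_coe_ne_top_iff_summable.2 hsum.toNNReal

lemma sum_smul_exitMeasure_le {d e : ℝ≥0∞} (hde : 1 + d ≤ e) :
    Measure.sum (fun p => (1 + d) ^ T.r p • T.exitMeasure p) ≤
      (1 + d * (ENNReal.ofReal (1 + T.Cd) ^ 2 * T.columnMoment e / μ T.base)) •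
        μ.restrict T.base := by
  set K := ENNReal.ofReal (1 + T.Cd) ^ 2
  refine Measure.le_iff'.2 fun E => ?_
  have hfloor : ∀ p, (1 + d) ^ T.r p * T.exitMeasure p E ≤ T.exitMeasure p E +
      d * ((T.r p * e ^ T.r p * μ (T.cell 0 p)) * (K / μ T.base * μ.restrict T.base E)) := by
    intro p
    have hexit : T.exitMeasure p E ≤ K * μ (T.cell 0 p) / μ T.base * μ.restrict T.base E :=
      T.exitMeasure_le_smul p E
    calc (1 + d) ^ T.r p * T.exitMeasure p E
        ≤ (1 + T.r p * d * e ^ T.r p) * T.exitMeasure p E := by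
          gcongr
          exact (one_add_pow_le_one_add_mul_mul_pow (zero_le (a := d)) _).trans (by gcongr)
      _ = T.exitMeasure p E + d * (T.r p * e ^ T.r p) * T.exitMeasure p E := by ring
      _ ≤ T.exitMeasure p E + d * (T.r p * e ^ T.r p) *
            (K * μ (T.cell 0 p) / μ T.base * μ.restrict T.base E) := by gcongr
      _ = _ := by simp only [div_eq_mul_inv]; ring
  calc Measure.sum (fun p => (1 + d) ^ T.r p • T.exitMeasure p) E
      ≤ ∑' p, (1 + d) ^ T.r p * T.exitMeasure p E := by
        simp only [Measure.sum_apply_of_countable, Measure.smul_apply, smul_eq_mul, le_refl]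
    _ ≤ ∑' p, (T.exitMeasure p E +
          d * ((T.r p * e ^ T.r p * μ (T.cell 0 p)) * (K / μ T.base * μ.restrict T.base E))) :=
        ENNReal.tsum_le_tsum hfloor
    _ = μ.restrict T.base E + d * (T.columnMoment e * (K / μ T.base * μ.restrict T.base E)) := by
        rw [ENNReal.tsum_add, ENNReal.tsum_mul_left, ENNReal.tsum_mul_right, ← T.sum_exitMeasure,
          Measure.sum_apply_of_countable, columnMoment]
    _ = _ := by simp only [Measure.smul_apply, smul_eq_mul, div_eq_mul_inv]; ring

lemma retCount_eq_sum (n : ℕ) (x : Δ) :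
    T.retCount n x = ∑ k ∈ Finset.Icc 1 n, if U^[k] x ∈ T.base then 1 else 0 :=
  Finset.card_filter _ _

lemma measurable_retCount (n : ℕ) : Measurable (T.retCount n) := by
  simp_rw [funext (T.retCount_eq_sum n)]
  exact Finset.measurable_sum _ fun k _ => Measurable.ite
    (T.measurableSet_base.preimage (T.measurable_iterate k)) measurable_const measurable_const

lemma retCount_succ (n : ℕ) (x : Δ) :
    T.retCount (n + 1) x = T.retCount n x + if U^[n + 1] x ∈ T.base then 1 else 0 := by
  simp only [retCount_eq_sum]
  exact Finset.sum_Icc_succ_top (by omega) _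

lemma retCount_add (a b : ℕ) (x : Δ) :
    T.retCount (a + b) x = T.retCount a x + T.retCount b (U^[a] x) := by
  induction b with
  | zero => simp [retCount]
  | succ b ih =>
    rw [← add_assoc, retCount_succ, retCount_succ, ih, ← Function.iterate_add_apply,
      show b + 1 + a = a + b + 1 by omega, add_assoc]

lemma retCount_eq_zero_of_mem_cell {k p m : ℕ} {x : Δ} (hx : x ∈ T.cell k p)
    (hm : k + m < T.r p) : T.retCount m x = 0 := by
  rw [retCount, Finset.card_eq_zero, Finset.filter_eq_empty_iff]
  intro i hi
  rw [Finset.mem_Icc] at hi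
  exact T.iterate_notMem_base hx (by omega) (by omega)

lemma retCount_first_return {k p : ℕ} {x : Δ} (hx : x ∈ T.cell k p) (hk : k < T.r p) :
    T.retCount (T.r p - k) x = 1 := by
  obtain ⟨i, hi⟩ : ∃ i, T.r p - k = i + 1 := ⟨T.r p - k - 1, by omega⟩
  have hret := T.iterate_mem_base hx hk
  rw [hi] at hret ⊢
  rw [retCount_succ, T.retCount_eq_zero_of_mem_cell hx (by omega), if_pos hret]

noncomputable def returnWeight (t : ℝ≥0∞) (n : ℕ) : Δ → ℝ≥0∞ :=
  (U^[n] ⁻¹' T.base).indicator fun x => t ^ T.retCount n x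

lemma measurable_returnWeight (t : ℝ≥0∞) (n : ℕ) : Measurable (T.returnWeight t n) :=
  (measurable_from_nat.comp (T.measurable_retCount n)).indicator
    (T.measurableSet_base.preimage (T.measurable_iterate n))

lemma returnWeight_of_iterate_mem (t : ℝ≥0∞) {n : ℕ} {x : Δ} (h : U^[n] x ∈ T.base) :
    T.returnWeight t n x = t ^ T.retCount n x :=
  indicator_of_mem (mem_preimage.2 h) _

lemma returnWeight_of_iterate_notMem (t : ℝ≥0∞) {n : ℕ} {x : Δ} (h : U^[n] x ∉ T.base) :
    T.returnWeight t n x = 0 :=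
  indicator_of_notMem (show x ∉ U^[n] ⁻¹' T.base from h) _

lemma returnWeight_le_one {t : ℝ≥0∞} (ht : t ≤ 1) (n : ℕ) (x : Δ) :
    T.returnWeight t n x ≤ 1 := by
  by_cases h : U^[n] x ∈ T.base
  · rw [T.returnWeight_of_iterate_mem t h]
    exact pow_le_one₀ zero_le ht
  · simp [T.returnWeight_of_iterate_notMem t h]

lemma returnWeight_zero_of_mem_base (t : ℝ≥0∞) {x : Δ} (hx : x ∈ T.base) :
    T.returnWeight t 0 x = 1 := by
  simp [returnWeight, hx, retCount]

lemma returnWeight_eq_zero_of_mem_cell (t : ℝ≥0∞) {k p n : ℕ} {x : Δ} (hx : x ∈ T.cell k p)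
    (hn : 0 < n) (hkn : k + n < T.r p) : T.returnWeight t n x = 0 :=
  T.returnWeight_of_iterate_notMem t (T.iterate_notMem_base hx hn hkn)

lemma returnWeight_of_mem_cell (t : ℝ≥0∞) {k p n : ℕ} {x : Δ} (hx : x ∈ T.cell k p)
    (hk : k < T.r p) (hn : T.r p - k ≤ n) :
    T.returnWeight t n x = t * T.returnWeight t (n - (T.r p - k)) (U^[T.r p - k] x) := by
  have hsplit : n = T.r p - k + (n - (T.r p - k)) := by omega
  have hiter : U^[n] x = U^[n - (T.r p - k)] (U^[T.r p - k] x) := by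
    rw [← Function.iterate_add_apply, add_comm, ← hsplit]
  have hcount : T.retCount n x = 1 + T.retCount (n - (T.r p - k)) (U^[T.r p - k] x) := by
    rw [← T.retCount_first_return hx hk, ← T.retCount_add, ← hsplit]
  by_cases hmem : U^[n] x ∈ T.base
  · rw [T.returnWeight_of_iterate_mem t hmem, T.returnWeight_of_iterate_mem t (by rwa [← hiter]),
      hcount, pow_add, pow_one]
  · rw [T.returnWeight_of_iterate_notMem t hmem,
      T.returnWeight_of_iterate_notMem t (by rwa [← hiter]), mul_zero]

/-- Truncated generating function of the `returnWeight`s; the truncation keeps its integral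
finite, which the renewal inequality needs. -/
noncomputable def returnSeries (t z : ℝ≥0∞) (N : ℕ) (y : Δ) : ℝ≥0∞ :=
  ∑ m ∈ Finset.range N, z ^ m * T.returnWeight t m y

lemma measurable_returnSeries (t z : ℝ≥0∞) (N : ℕ) : Measurable (T.returnSeries t z N) :=
  Finset.measurable_sum _ fun m _ => (T.measurable_returnWeight t m).const_mul _

lemma returnSeries_succ (t z : ℝ≥0∞) (N : ℕ) (y : Δ) :
    T.returnSeries t z (N + 1) y = T.returnSeries t z N y + z ^ N * T.returnWeight t N y :=
  Finset.sum_range_succ _ _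

lemma returnSeries_mono (t z : ℝ≥0∞) (y : Δ) : Monotone fun N => T.returnSeries t z N y :=
  fun _ _ h => Finset.sum_le_sum_of_subset (Finset.range_mono h)

lemma returnSeries_le {t : ℝ≥0∞} (ht : t ≤ 1) (z : ℝ≥0∞) (N : ℕ) (y : Δ) :
    T.returnSeries t z N y ≤ ∑ m ∈ Finset.range N, z ^ m :=
  Finset.sum_le_sum fun m _ => mul_le_of_le_one_right zero_le (T.returnWeight_le_one ht m y)

/-- The renewal equation: a point of `Δ_{0,p}` first comes back to the basis at time `r_p`. -/
lemma returnSeries_succ_eq (t z : ℝ≥0∞) {p : ℕ} {y : Δ} (hy : y ∈ T.cell 0 p) (N : ℕ) :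
    T.returnSeries t z (N + 1) y =
      1 + t * z ^ T.r p * T.returnSeries t z (N + 1 - T.r p) (U^[T.r p] y) := by
  have hr := T.r_pos p
  induction N with
  | zero =>
    simp [returnSeries, T.returnWeight_zero_of_mem_base t (T.cell_zero_subset_base p hy),
      Nat.sub_eq_zero_of_le hr]
  | succ N ih =>
    rw [T.returnSeries_succ, ih]
    rcases lt_or_ge (N + 1) (T.r p) with hN | hN
    · rw [T.returnWeight_eq_zero_of_mem_cell t hy (by omega) (by omega),
        Nat.sub_eq_zero_of_le (by omega : N + 1 + 1 ≤ T.r p), Nat.sub_eq_zero_of_le hN.le]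
      simp
    · rw [T.returnWeight_of_mem_cell t hy hr (by omega), Nat.sub_zero,
        show N + 1 + 1 - T.r p = N + 1 - T.r p + 1 by omega, T.returnSeries_succ,
        show z ^ (N + 1) = z ^ T.r p * z ^ (N + 1 - T.r p) by rw [← pow_add]; congr 1; omega]
      ring

lemma setLIntegral_cell_zero_returnSeries_le (t z : ℝ≥0∞) (p N : ℕ) :
    ∫⁻ y in T.cell 0 p, T.returnSeries t z (N + 1) y ∂μ ≤
      μ (T.cell 0 p) + t * (z ^ T.r p * ∫⁻ y, T.returnSeries t z (N + 1) y ∂T.exitMeasure p) := by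
  set S := T.returnSeries t z (N + 1)
  have hS : Measurable S := T.measurable_returnSeries t z (N + 1)
  have hmap := T.map_iterate_restrict_cell_eq_exitMeasure (μ := μ) (T.r_pos p)
  rw [Nat.sub_zero] at hmap
  calc ∫⁻ y in T.cell 0 p, S y ∂μ = ∫⁻ y in T.cell 0 p,
        (1 + t * z ^ T.r p * T.returnSeries t z (N + 1 - T.r p) (U^[T.r p] y)) ∂μ :=
        setLIntegral_congr_fun (T.cell_meas 0 p) fun y hy => T.returnSeries_succ_eq t z hy N
    _ ≤ ∫⁻ y in T.cell 0 p, (1 + t * z ^ T.r p * S (U^[T.r p] y)) ∂μ := by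
        gcongr with y
        exact T.returnSeries_mono t z _ (Nat.sub_le _ _)
    _ = μ (T.cell 0 p) + t * (z ^ T.r p * ∫⁻ y, S y ∂T.exitMeasure p) := by
        rw [lintegral_add_left measurable_const, setLIntegral_const, one_mul,
          lintegral_const_mul _ (show Measurable fun y => S (U^[T.r p] y) from
            hS.comp (T.measurable_iterate _)), ← hmap,
          lintegral_map hS (T.measurable_iterate _), mul_assoc]

lemma lintegral_base_returnSeries_le {t z b : ℝ≥0∞} (ht : t ≤ 1) (hz : z ≠ ⊤)
    (hb : Measure.sum (fun p => z ^ T.r p • T.exitMeasure p) ≤ b • μ.restrict T.base)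
    (N : ℕ) : ∫⁻ y in T.base, T.returnSeries t z (N + 1) y ∂μ ≤ (1 - t * b)⁻¹ := by
  have := T.isProb
  set S := T.returnSeries t z (N + 1)
  have hfin : ∫⁻ y in T.base, S y ∂μ ≠ ⊤ := by
    refine ne_top_of_le_ne_top ?_ (setLIntegral_mono' T.measurableSet_base
      fun y _ => T.returnSeries_le ht z (N + 1) y)
    rw [setLIntegral_const]
    exact ENNReal.mul_ne_top (ENNReal.sum_ne_top.2 fun m _ => ENNReal.pow_ne_top hz)
      T.measure_base_ne_top
  refine ENNReal.le_inv_one_sub_of_le_one_add_mul hfin ?_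
  calc ∫⁻ y in T.base, S y ∂μ = ∑' p, ∫⁻ y in T.cell 0 p, S y ∂μ := T.lintegral_base_eq_tsum S
    _ ≤ ∑' p, (μ (T.cell 0 p) + t * (z ^ T.r p * ∫⁻ y, S y ∂T.exitMeasure p)) :=
        ENNReal.tsum_le_tsum fun p => T.setLIntegral_cell_zero_returnSeries_le t z p N
    _ = μ T.base + t * ∫⁻ y, S y ∂Measure.sum (fun p => z ^ T.r p • T.exitMeasure p) := by
        simp only [lintegral_sum_measure, lintegral_smul_measure, smul_eq_mul]
        rw [ENNReal.tsum_add, ENNReal.tsum_mul_left, ← T.measure_level 0]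
        rfl
    _ ≤ 1 + t * ∫⁻ y, S y ∂(b • μ.restrict T.base) := by
        gcongr
        exact prob_le_one
    _ = 1 + t * b * ∫⁻ y in T.base, S y ∂μ := by rw [lintegral_smul_measure, smul_eq_mul, mul_assoc]

lemma lintegral_base_returnWeight_le {t z b : ℝ≥0∞} (ht : t ≤ 1) (hz0 : z ≠ 0) (hz : z ≠ ⊤)
    (hb : Measure.sum (fun p => z ^ T.r p • T.exitMeasure p) ≤ b • μ.restrict T.base)
    (m : ℕ) : ∫⁻ y in T.base, T.returnWeight t m y ∂μ ≤ (1 - t * b)⁻¹ * z⁻¹ ^ m := by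
  have hterm : z ^ m * ∫⁻ y in T.base, T.returnWeight t m y ∂μ ≤ (1 - t * b)⁻¹ := by
    rw [← lintegral_const_mul _ (T.measurable_returnWeight t m)]
    refine (lintegral_mono fun y => ?_).trans (T.lintegral_base_returnSeries_le ht hz hb m)
    exact Finset.single_le_sum (f := fun k => z ^ k * T.returnWeight t k y)
      (fun _ _ => zero_le) (Finset.self_mem_range_succ m)
  rw [← ENNReal.inv_pow, ← div_eq_mul_inv, ENNReal.le_div_iff_mul_le
    (Or.inl (pow_ne_zero _ hz0)) (Or.inl (ENNReal.pow_ne_top hz)), mul_comm]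
  exact hterm

lemma setLIntegral_cell_returnWeight_le (t : ℝ≥0∞) {k p n : ℕ} (hn : 0 < n) :
    ∫⁻ x in T.cell k p, T.returnWeight t n x ∂μ ≤
      t * ∫⁻ y, T.returnWeight t (n - (T.r p - k)) y ∂T.exitMeasure p := by
  rcases lt_or_ge k (T.r p) with hk | hk
  swap
  · simp [T.cell_empty k p hk]
  have hmeas := T.measurable_returnWeight t (n - (T.r p - k))
  rw [← T.map_iterate_restrict_cell_eq_exitMeasure hk, lintegral_map hmeas (T.measurable_iterate _),
    ← lintegral_const_mul _ (show Measurable fun x => T.returnWeight t (n - (T.r p - k))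
      (U^[T.r p - k] x) from hmeas.comp (T.measurable_iterate _))]
  refine setLIntegral_mono' (T.cell_meas k p) fun x hx => ?_
  rcases le_or_gt (T.r p - k) n with hj | hj
  · exact (T.returnWeight_of_mem_cell t hx hk hj).le
  · rw [T.returnWeight_eq_zero_of_mem_cell t hx hn (by omega)]
    exact zero_le

lemma lintegral_returnWeight_zero_mul_pow_height (t e : ℝ≥0∞) :
    ∫⁻ x, T.returnWeight t 0 x * e ^ T.height x ∂μ = μ T.base := by
  rw [← lintegral_indicator_one T.measurableSet_base]
  refine lintegral_congr fun x => ?_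
  by_cases hx : x ∈ T.base
  · obtain ⟨m, hm⟩ := mem_iUnion.1 hx
    simp [T.returnWeight_zero_of_mem_base t hx, T.height_spec 0 m x hm, hx]
  · simp [T.returnWeight_of_iterate_notMem t (n := 0) hx, hx]

lemma setLIntegral_cell_returnWeight_mul_pow_height_le {t z e b : ℝ≥0∞} (ht : t ≤ 1)
    (hz1 : 1 ≤ z) (hze : z ≤ e) (hz : z ≠ ⊤)
    (hb : Measure.sum (fun p => z ^ T.r p • T.exitMeasure p) ≤ b • μ.restrict T.base)
    {k p n : ℕ} (hk : k < T.r p) (hn : 0 < n) :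
    ∫⁻ x in T.cell k p, T.returnWeight t n x * e ^ T.height x ∂μ ≤
      t * (1 - t * b)⁻¹ * ENNReal.ofReal (1 + T.Cd) ^ 2 / μ T.base * z⁻¹ ^ n *
        (e ^ T.r p * μ (T.cell 0 p)) := by
  set K := ENNReal.ofReal (1 + T.Cd) ^ 2
  calc ∫⁻ x in T.cell k p, T.returnWeight t n x * e ^ T.height x ∂μ
      = (∫⁻ x in T.cell k p, T.returnWeight t n x ∂μ) * e ^ k := by
        rw [← lintegral_mul_const _ (T.measurable_returnWeight t n)]
        exact setLIntegral_congr_fun (T.cell_meas k p) fun x hx => by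
          rw [T.height_spec k p x hx]
    _ ≤ t * (K * μ (T.cell 0 p) / μ T.base *
          ((1 - t * b)⁻¹ * z⁻¹ ^ (n - (T.r p - k)))) * e ^ k := by
        gcongr
        refine (T.setLIntegral_cell_returnWeight_le t hn).trans ?_
        gcongr
        exact (T.lintegral_exitMeasure_le p _).trans (by
          gcongr
          exact T.lintegral_base_returnWeight_le ht (zero_lt_one.trans_le hz1).ne' hz hb _)
    _ ≤ t * (K * μ (T.cell 0 p) / μ T.base *
          ((1 - t * b)⁻¹ * (z⁻¹ ^ n * e ^ (T.r p - k)))) * e ^ k := by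
        gcongr
        exact (ENNReal.inv_pow_tsub_le hz1 hz n _).trans (by gcongr)
    _ = _ := by
        rw [show e ^ T.r p = e ^ (T.r p - k) * e ^ k by rw [← pow_add, Nat.sub_add_cancel hk.le]]
        simp only [div_eq_mul_inv]
        ring

lemma lintegral_returnWeight_mul_pow_height_le {t z e b : ℝ≥0∞} (ht : t ≤ 1) (hz1 : 1 ≤ z)
    (hze : z ≤ e) (hz : z ≠ ⊤)
    (hb : Measure.sum (fun p => z ^ T.r p • T.exitMeasure p) ≤ b • μ.restrict T.base)
    {n : ℕ} (hn : 0 < n) :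
    ∫⁻ x, T.returnWeight t n x * e ^ T.height x ∂μ ≤
      t * (1 - t * b)⁻¹ * ENNReal.ofReal (1 + T.Cd) ^ 2 * T.columnMoment e / μ T.base *
        z⁻¹ ^ n := by
  set c := t * (1 - t * b)⁻¹ * ENNReal.ofReal (1 + T.Cd) ^ 2 / μ T.base * z⁻¹ ^ n
  calc ∫⁻ x, T.returnWeight t n x * e ^ T.height x ∂μ
      = ∑' p, ∑ k ∈ Finset.range (T.r p),
          ∫⁻ x in T.cell k p, T.returnWeight t n x * e ^ T.height x ∂μ :=
        T.lintegral_eq_tsum_sum_cell _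
    _ ≤ ∑' p, ∑ k ∈ Finset.range (T.r p), c * (e ^ T.r p * μ (T.cell 0 p)) :=
        ENNReal.tsum_le_tsum fun p => Finset.sum_le_sum fun k hk =>
          T.setLIntegral_cell_returnWeight_mul_pow_height_le ht hz1 hze hz hb
            (Finset.mem_range.1 hk) hn
    _ = c * T.columnMoment e := by
        simp only [Finset.sum_const, Finset.card_range, nsmul_eq_mul, columnMoment,
          ← ENNReal.tsum_mul_left]
        congr 1 with p
        ring
    _ = _ := by simp only [c, div_eq_mul_inv]; ring

lemma setLIntegral_preimage_base_eq {τ : ℝ} (hτ : 0 ≤ τ) (ε : ℝ) (n : ℕ) :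
    ∫⁻ x in U^[n] ⁻¹' T.base, ENNReal.ofReal (τ ^ T.retCount n x * Real.exp (ε * T.height x)) ∂μ =
      ∫⁻ x, T.returnWeight (ENNReal.ofReal τ) n x *
        ENNReal.ofReal (Real.exp ε) ^ T.height x ∂μ := by
  rw [← lintegral_indicator (T.measurableSet_base.preimage (T.measurable_iterate n))]
  refine lintegral_congr fun x => ?_
  by_cases hx : U^[n] x ∈ T.base
  · rw [indicator_of_mem (mem_preimage.2 hx), T.returnWeight_of_iterate_mem _ hx,
      ENNReal.ofReal_mul (by positivity), ENNReal.ofReal_pow hτ, mul_comm ε, Real.exp_nat_mul,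
      ENNReal.ofReal_pow (Real.exp_pos ε).le]
  · rw [indicator_of_notMem (show x ∉ U^[n] ⁻¹' T.base from hx),
      T.returnWeight_of_iterate_notMem _ hx, zero_mul]

lemma exists_lintegral_returnWeight_mul_pow_height_le {C ρ c : ℝ} (htails : T.ExpTails C ρ)
    (hρ : 0 ≤ ρ) (hc : 1 < c) (hcρ : c * ρ < 1) {t : ℝ≥0∞} (ht : t < 1) :
    ∃ K ≠ ⊤, ∃ z : ℝ≥0∞, 1 < z ∧ z ≠ ⊤ ∧ ∀ n,
      ∫⁻ x, T.returnWeight t n x * ENNReal.ofReal c ^ T.height x ∂μ ≤ K * z⁻¹ ^ n := by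
  have := T.isProb
  set e := ENNReal.ofReal c
  have hA : T.columnMoment e ≠ ⊤ := T.columnMoment_ne_top htails hρ (by linarith) hcρ
  set B := ENNReal.ofReal (1 + T.Cd) ^ 2 * T.columnMoment e / μ T.base
  have hB : B ≠ ⊤ := ENNReal.div_ne_top (ENNReal.mul_ne_top (by simp) hA) T.measure_base_ne_zero
  obtain ⟨d, hd0, hd, hde, htb⟩ :=
    ENNReal.exists_pos_one_add_le_and_mul_one_add_mul_lt ht hB (ENNReal.one_lt_ofReal.2 hc)
  have hz1 : 1 < 1 + d := ENNReal.lt_add_right ENNReal.one_ne_top hd0.ne'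
  set C := t * (1 - t * (1 + d * B))⁻¹ * ENNReal.ofReal (1 + T.Cd) ^ 2 * T.columnMoment e /
    μ T.base
  have hC : C ≠ ⊤ := ENNReal.div_ne_top (ENNReal.mul_ne_top (ENNReal.mul_ne_top
    (ENNReal.mul_ne_top ht.ne_top (ENNReal.inv_ne_top.2 (tsub_pos_of_lt htb).ne')) (by simp)) hA)
    T.measure_base_ne_zero
  refine ⟨C + 1, ENNReal.add_ne_top.2 ⟨hC, ENNReal.one_ne_top⟩, 1 + d, hz1,
    ENNReal.add_ne_top.2 ⟨ENNReal.one_ne_top, hd⟩, ?_⟩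
  rintro (_ | n)
  · rw [T.lintegral_returnWeight_zero_mul_pow_height, pow_zero, mul_one]
    exact prob_le_one.trans le_add_self
  · exact (T.lintegral_returnWeight_mul_pow_height_le ht.le hz1.le hde
      (ENNReal.add_ne_top.2 ⟨ENNReal.one_ne_top, hd⟩) (T.sum_smul_exitMeasure_le hde)
      n.succ_pos).trans (by gcongr; exact le_self_add)

end YoungTower

theorem renewal_exponential_estimate_general
    {Δ : Type*} [MeasurableSpace Δ] {μ : Measure Δ} {U : Δ → Δ}
    (T : YoungTower μ U)
    (C0 ρ : ℝ) (hρ0 : 0 < ρ) (htails : T.ExpTails C0 ρ)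
    (τ : ℝ) (hτ0 : 0 < τ) (hτ1 : τ < 1)
    (ε : ℝ) (hε : 0 < ε) (hερ : Real.exp ε * ρ < 1) :
    ∃ C' : ℝ, 0 < C' ∧ ∃ θ : ℝ, 0 < θ ∧ θ < 1 ∧ ∀ n : ℕ,
      ∫⁻ x in (U^[n]) ⁻¹' T.base,
          ENNReal.ofReal (τ ^ (T.retCount n x) * Real.exp (ε * T.height x)) ∂μ ≤
        ENNReal.ofReal (C' * θ ^ n) := by
  obtain ⟨K, hK, z, hz1, hz, hbound⟩ := T.exists_lintegral_returnWeight_mul_pow_height_le htails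
    hρ0.le (Real.one_lt_exp_iff.2 hε) hερ (ENNReal.ofReal_lt_one.2 hτ1)
  have hθ : z⁻¹ ≠ ⊤ := ENNReal.inv_ne_top.2 (zero_lt_one.trans hz1).ne'
  refine ⟨K.toReal + 1, by positivity, z⁻¹.toReal, ENNReal.toReal_pos (ENNReal.inv_ne_zero.2 hz) hθ,
    (ENNReal.toReal_lt_toReal hθ ENNReal.one_ne_top).2 (ENNReal.inv_lt_one.2 hz1), fun n => ?_⟩
  rw [T.setLIntegral_preimage_base_eq hτ0.le, ENNReal.ofReal_mul (by positivity),
    ENNReal.ofReal_pow ENNReal.toReal_nonneg, ENNReal.ofReal_toReal hθ]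
  refine (hbound n).trans (by
    gcongr
    exact (ENNReal.le_ofReal_iff_toReal_le hK (by positivity)).2 (by linarith))

/-- Lemma `renouvell_exp`: on an expanding Young tower with `μ(Δ_n) ≤ C ρⁿ`, for `τ < 1`
and `ε > 0` with `e^ε ρ < 1`, the integral `∫_{U^{-n} Δ₀} τ^{Ψ_n} e^{ε ω} dμ` is
exponentially small in `n`. -/
theorem renewal_exponential_estimate
    {Δ : Type*} [MeasurableSpace Δ] {μ : Measure Δ} {U : Δ → Δ}
    (T : YoungTower μ U)
    (C0 ρ : ℝ) (hC0 : 0 < C0) (hρ0 : 0 < ρ) (hρ1 : ρ < 1) (htails : T.ExpTails C0 ρ)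
    (τ : ℝ) (hτ0 : 0 < τ) (hτ1 : τ < 1)
    (ε : ℝ) (hε : 0 < ε) (hερ : Real.exp ε * ρ < 1) :
    ∃ C' : ℝ, 0 < C' ∧ ∃ θ : ℝ, 0 < θ ∧ θ < 1 ∧ ∀ n : ℕ,
      ∫⁻ x in (U^[n]) ⁻¹' T.base,
          ENNReal.ofReal (τ ^ (T.retCount n x) * Real.exp (ε * T.height x)) ∂μ ≤
        ENNReal.ofReal (C' * θ ^ n) :=
  renewal_exponential_estimate_general T C0 ρ hρ0 htails τ hτ0 hτ1 ε hε hερ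
end

section
/- Let U : Δ → Δ be an expanding Young tower with exponentially small tails, and let g : Δ → ℝ belong to L^p(μ) for every p < 2. Define G : Δ → ℝ by G(x) = ∑_{j=0}^{ω(x)−1} g(U^j π₀ x), where ω(x) is the height of x and π₀ the projection to the basis. Then G ∈ L^p(μ) for every p < 2. -/
/-!
On the cell `Δ_{n,p}` the function `G` is `∑_{j<n} g ∘ U^j ∘ π₀`, and `x ↦ U^j (π₀ x)` carries
`μ` restricted to `Δ_{n,p}` onto `μ` restricted to `Δ_{j,p}`. Choosing `p < q < 2`, the power-mean
inequality therefore gives `∫_{Δ_n} |G|^q ≤ n^q ‖g‖_q^q`, and Hölder's inequality on `Δ_n` turns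
this into `∫_{Δ_n} |G|^p ≤ n^p ‖g‖_q^p μ(Δ_n)^(1 - p/q)`, which is summable because the tails
decay exponentially.

The projection `π₀` is not assumed measurable: preimages under `π₀` are images under `U^n` of
measurable subsets of the base. These are null measurable by Carathéodory's criterion, since `U`
maps each cell below the top of its column onto the next one without increasing outer measure
while being measure preserving.
-/

open MeasureTheory Filter Set
open scoped ENNReal NNReal Topology Classical

open Finset (range)
open scoped Function

section MeasureTheory

variable {α : Type*} [MeasurableSpace α] {μ : Measure α}

lemma nullMeasurableSet_of_measure_add_measure_sdiff_le {s m : Set α} (hm : MeasurableSet m)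
    (hsm : s ⊆ m) (hfin : μ m ≠ ∞) (h : μ s + μ (m \ s) ≤ μ m) : NullMeasurableSet s μ := by
  set t := toMeasurable μ s ∩ m
  have ht : MeasurableSet t := (measurableSet_toMeasurable μ s).inter hm
  have hst : s ⊆ t := subset_inter (subset_toMeasurable μ s) hsm
  have htm : t ⊆ m := inter_subset_right
  have hμt : μ t = μ s :=
    le_antisymm ((measure_mono inter_subset_left).trans (measure_toMeasurable s).le)
      (measure_mono hst)
  have hμm : μ m = μ t + μ (m \ t) := by
    rw [← measure_inter_add_sdiff m ht, inter_eq_right.2 htm]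
  have hsplit : μ (m \ s) = μ (t \ s) + μ (m \ t) := by
    rw [← measure_inter_add_sdiff (m \ s) ht]
    congr 2 <;> ext x <;> simp only [Set.mem_inter_iff, Set.mem_sdiff] <;>
      have := @hst x <;> have := @htm x <;> tauto
  have hnull : μ (t \ s) = 0 := by
    refine nonpos_iff_eq_zero.1 (ENNReal.le_of_add_le_add_left hfin ?_)
    calc μ m + μ (t \ s) = μ s + μ (m \ s) := by rw [hsplit, hμm, hμt]; ring
      _ ≤ μ m + 0 := by rwa [add_zero]
  exact ht.nullMeasurableSet.congr (ae_eq_set.2 ⟨hnull, by simp [sdiff_eq_empty.2 hst]⟩)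

lemma lintegral_rpow_le_lintegral_rpow_mul_measure_univ (ν : Measure α) {F : α → ℝ≥0∞}
    (hF : AEMeasurable F ν) {p q : ℝ} (hp : 0 < p) (hpq : p < q) :
    ∫⁻ x, F x ^ p ∂ν ≤ (∫⁻ x, F x ^ q ∂ν) ^ (p / q) * ν univ ^ (1 - p / q) := by
  have hconj : (q / p).HolderConjugate (q / p).conjExponent :=
    .conjExponent ((one_lt_div hp).2 hpq)
  have key := ENNReal.lintegral_mul_le_Lp_mul_Lq ν hconj (hF.pow_const p)
    (aemeasurable_const (b := 1))
  have hpow : ∀ x, (F x ^ p) ^ (q / p) = F x ^ q := fun x => by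
    rw [← ENNReal.rpow_mul, mul_div_cancel₀ q hp.ne']
  have hinv : 1 / (q / p).conjExponent = 1 - p / q := by
    rw [one_div, eq_sub_iff_add_eq, ← hconj.inv_add_inv_eq_one, inv_div, add_comm]
  simpa only [Pi.mul_apply, mul_one, ENNReal.one_rpow, lintegral_one, one_div_div, hinv,
    hpow] using key

end MeasureTheory

lemma ENNReal.rpow_sub_one_mul_self {x : ℝ≥0∞} (hx : x ≠ ∞) {q : ℝ} (hq : 0 < q) :
    x ^ (q - 1) * x = x ^ q := by
  rcases eq_or_ne x 0 with rfl | hx0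
  · simp [ENNReal.zero_rpow_of_pos hq]
  · conv_rhs => rw [← sub_add_cancel q 1, ENNReal.rpow_add _ _ hx0 hx, ENNReal.rpow_one]

lemma ENNReal.tsum_natCast_rpow_mul_pow_lt_top {r : ℝ≥0∞} (hr : r < 1) {s : ℝ} (hs : 0 ≤ s) :
    ∑' n : ℕ, (n : ℝ≥0∞) ^ s * r ^ n < ∞ := by
  have hpow : ∀ n : ℕ, (n : ℝ≥0∞) ^ s ≤ (n : ℝ≥0∞) ^ ⌈s⌉₊ := by
    intro n
    rcases Nat.eq_zero_or_pos n with rfl | hn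
    · rcases hs.eq_or_lt with rfl | hs
      · simp
      · simp [ENNReal.zero_rpow_of_pos hs]
    · rw [← ENNReal.rpow_natCast]
      exact ENNReal.rpow_le_rpow_of_exponent_le (by exact_mod_cast hn) (Nat.le_ceil s)
  lift r to ℝ≥0 using hr.ne_top
  have hsum : Summable fun n : ℕ => (n : ℝ≥0) ^ ⌈s⌉₊ * r ^ n := by
    rw [← NNReal.summable_coe]
    push_cast
    exact summable_pow_mul_geometric_of_norm_lt_one _ (by simpa using hr)
  calc ∑' n : ℕ, (n : ℝ≥0∞) ^ s * (r : ℝ≥0∞) ^ n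
      ≤ ∑' n : ℕ, (((n : ℝ≥0) ^ ⌈s⌉₊ * r ^ n : ℝ≥0) : ℝ≥0∞) :=
        ENNReal.tsum_le_tsum fun n => by push_cast; gcongr; exact hpow n
    _ < ∞ := ENNReal.tsum_coe_ne_top_iff_summable.2 hsum |>.lt_top

namespace YoungTower

variable {Δ : Type*} [MeasurableSpace Δ] {μ : Measure Δ} {U : Δ → Δ} (T : YoungTower μ U)

lemma iUnion_cell : ⋃ i : ℕ × ℕ, T.cell i.1 i.2 = univ :=
  eq_univ_of_forall fun x => by
    obtain ⟨p, k, -, hx⟩ := T.cell_cover x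
    exact mem_iUnion.2 ⟨(k, p), hx⟩

lemma iUnion_level : ⋃ n, T.level n = univ :=
  eq_univ_of_forall fun x => by
    obtain ⟨p, k, -, hx⟩ := T.cell_cover x
    exact mem_iUnion.2 ⟨k, mem_iUnion.2 ⟨p, hx⟩⟩

lemma measurableSet_level (n : ℕ) : MeasurableSet (T.level n) :=
  .iUnion fun p => T.cell_meas n p

lemma pairwise_disjoint_cell (n : ℕ) : Pairwise (Disjoint on fun p => T.cell n p) :=
  fun p p' hp => T.cell_disj n p n p' (by simpa using hp)

lemma pairwise_disjoint_level : Pairwise (Disjoint on T.level) := fun n n' hn =>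
  disjoint_iUnion_left.2 fun p => disjoint_iUnion_right.2 fun p' =>
    T.cell_disj n p n' p' (by simp [hn])

lemma towerSum_of_mem {g : Δ → ℝ} {n p : ℕ} {x : Δ} (hx : x ∈ T.cell n p) :
    T.towerSum g x = ∑ j ∈ range n, g (U^[j] (T.proj x)) := by
  rw [towerSum, T.height_spec n p x hx]

lemma bijOn_iterate {p n : ℕ} (hn : n < T.r p) : BijOn U^[n] (T.cell 0 p) (T.cell n p) := by
  induction n with
  | zero => exact bijOn_id _
  | succ n ih =>
    rw [Function.iterate_succ']
    exact (T.map_up p n hn).comp (ih (by omega))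

lemma preimage_cell_succ {p k : ℕ} (hk : k + 1 < T.r p) : U ⁻¹' T.cell (k + 1) p = T.cell k p := by
  refine Subset.antisymm (fun x hx => ?_) (T.map_up p k hk).mapsTo
  obtain ⟨p', k', hk', hx'⟩ := T.cell_cover x
  rcases lt_or_ge (k' + 1) (T.r p') with htop | htop
  · by_contra hxk
    have hne : (k' + 1, p') ≠ (k + 1, p) := fun h => by
      simp only [Prod.mk.injEq, add_left_inj] at h
      exact hxk (h.1 ▸ h.2 ▸ hx')
    exact T.cell_disj _ _ _ _ hne |>.ne_of_mem ((T.map_up p' k' htop).mapsTo hx') hx rfl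
  · rw [show k' = T.r p' - 1 by omega] at hx'
    obtain ⟨m, hm⟩ := mem_iUnion.1 ((T.map_top p').mapsTo hx')
    exact absurd rfl (T.cell_disj 0 m (k + 1) p (by simp) |>.ne_of_mem hm hx)

lemma preimage_iterate_cell {p n : ℕ} (hn : n < T.r p) : U^[n] ⁻¹' T.cell n p = T.cell 0 p := by
  induction n with
  | zero => rfl
  | succ n ih => rw [Function.iterate_succ', preimage_comp, T.preimage_cell_succ hn, ih (by omega)]

lemma image_iterate_subset_cell {p n : ℕ} (hn : n < T.r p) {A : Set Δ} (hA : A ⊆ T.cell 0 p) :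
    U^[n] '' A ⊆ T.cell n p :=
  ((T.bijOn_iterate hn).mapsTo.mono_left hA).image_subset

lemma measure_image_le {p k : ℕ} (hk : k + 1 < T.r p) {B : Set Δ} (hB : B ⊆ T.cell k p) :
    μ (U '' B) ≤ μ B := by
  set B' := toMeasurable μ B ∩ T.cell k p
  calc μ (U '' B) ≤ μ (U '' B') :=
        measure_mono (image_mono (subset_inter (subset_toMeasurable μ B) hB))
    _ = μ B' := T.map_up_measure p k hk B' inter_subset_right
        ((measurableSet_toMeasurable μ B).inter (T.cell_meas k p))
    _ ≤ μ B := (measure_mono inter_subset_left).trans (measure_toMeasurable B).le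

lemma measure_image_iterate_le {p n : ℕ} (hn : n < T.r p) {A : Set Δ} (hA : A ⊆ T.cell 0 p) :
    μ (U^[n] '' A) ≤ μ A := by
  induction n with
  | zero => simp
  | succ n ih =>
    rw [Function.iterate_succ', image_comp]
    exact (T.measure_image_le hn (T.image_iterate_subset_cell (by omega) hA)).trans
      (ih (by omega))

lemma nullMeasurableSet_image_iterate {p n : ℕ} (hn : n < T.r p) {A : Set Δ}
    (hA : A ⊆ T.cell 0 p) (hAm : MeasurableSet A) : NullMeasurableSet (U^[n] '' A) μ := by
  have hbij := T.bijOn_iterate hn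
  have hcompl : T.cell n p \ U^[n] '' A = U^[n] '' (T.cell 0 p \ A) := by
    rw [hbij.injOn.image_sdiff_subset hA, hbij.image_eq]
  have := T.isProb
  refine nullMeasurableSet_of_measure_add_measure_sdiff_le (T.cell_meas n p)
    (T.image_iterate_subset_cell hn hA) (measure_ne_top μ _) ?_
  calc μ (U^[n] '' A) + μ (T.cell n p \ U^[n] '' A)
      ≤ μ A + μ (T.cell 0 p \ A) := by
        rw [hcompl]
        exact add_le_add (T.measure_image_iterate_le hn hA)
          (T.measure_image_iterate_le hn sdiff_subset)
    _ = μ (T.cell 0 p) := by rw [measure_add_sdiff hAm.nullMeasurableSet, union_eq_right.2 hA]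
    _ = μ (T.cell n p) := by
        rw [← T.preimage_iterate_cell hn,
          (T.measurePreserving_U.iterate n).measure_preimage (T.cell_meas n p).nullMeasurableSet]

lemma measure_image_iterate {p n : ℕ} (hn : n < T.r p) {A : Set Δ}
    (hA : A ⊆ T.cell 0 p) (hAm : MeasurableSet A) : μ (U^[n] '' A) = μ A := by
  have hsub : U^[n] ⁻¹' (U^[n] '' A) ⊆ T.cell 0 p := by
    rw [← T.preimage_iterate_cell hn]
    exact preimage_mono (T.image_iterate_subset_cell hn hA)
  have hpre : U^[n] ⁻¹' (U^[n] '' A) = A := by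
    rw [← inter_eq_left.2 hsub, (T.bijOn_iterate hn).injOn.preimage_image_inter hA]
  rw [← (T.measurePreserving_U.iterate n).measure_preimage
    (T.nullMeasurableSet_image_iterate hn hA hAm), hpre]

lemma cell_inter_preimage_proj {p n : ℕ} (hn : n < T.r p) (E : Set Δ) :
    T.cell n p ∩ T.proj ⁻¹' E = U^[n] '' (E ∩ T.cell 0 p) := by
  ext x
  constructor
  · rintro ⟨hx, hxE⟩
    obtain ⟨hproj, hUx⟩ := T.proj_spec n p x hx
    exact ⟨T.proj x, ⟨hxE, hproj⟩, hUx⟩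
  · rintro ⟨y, ⟨hyE, hy⟩, rfl⟩
    have hx := (T.bijOn_iterate hn).mapsTo hy
    obtain ⟨hproj, hUx⟩ := T.proj_spec n p _ hx
    refine ⟨hx, ?_⟩
    rwa [mem_preimage, (T.bijOn_iterate hn).injOn hproj hy hUx]

lemma nullMeasurableSet_cell_inter_preimage_proj {p n : ℕ} (hn : n < T.r p) {E : Set Δ}
    (hE : MeasurableSet E) : NullMeasurableSet (T.cell n p ∩ T.proj ⁻¹' E) μ := by
  rw [T.cell_inter_preimage_proj hn]
  exact T.nullMeasurableSet_image_iterate hn inter_subset_right (hE.inter (T.cell_meas 0 p))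

lemma measure_cell_inter_preimage_proj {p n : ℕ} (hn : n < T.r p) {E : Set Δ}
    (hE : MeasurableSet E) : μ (T.cell n p ∩ T.proj ⁻¹' E) = μ (E ∩ T.cell 0 p) := by
  rw [T.cell_inter_preimage_proj hn]
  exact T.measure_image_iterate hn inter_subset_right (hE.inter (T.cell_meas 0 p))

lemma aemeasurable_comp_proj {β : Type*} [MeasurableSpace β]
    [MeasurableSpace.CountablyGenerated β] {f : Δ → β} (hf : Measurable f) {p n : ℕ}
    (hn : n < T.r p) : AEMeasurable (fun x => f (T.proj x)) (μ.restrict (T.cell n p)) :=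
  NullMeasurable.aemeasurable fun E hE => by
    rw [nullMeasurableSet_restrict (T.cell_meas n p).nullMeasurableSet, inter_comm]
    exact T.nullMeasurableSet_cell_inter_preimage_proj hn (hf hE)

lemma map_restrict_cell_comp_proj {β : Type*} [MeasurableSpace β]
    [MeasurableSpace.CountablyGenerated β] {f : Δ → β} (hf : Measurable f) {p n : ℕ}
    (hn : n < T.r p) :
    (μ.restrict (T.cell n p)).map (fun x => f (T.proj x)) = (μ.restrict (T.cell 0 p)).map f := by
  ext E hE
  rw [Measure.map_apply_of_aemeasurable (T.aemeasurable_comp_proj hf hn) hE,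
    Measure.map_apply hf hE, Measure.restrict_apply' (T.cell_meas n p),
    Measure.restrict_apply' (T.cell_meas 0 p), inter_comm]
  exact T.measure_cell_inter_preimage_proj hn (hf hE)

lemma setLIntegral_cell_comp_proj {f : Δ → ℝ≥0∞} (hf : Measurable f) {p n : ℕ}
    (hn : n < T.r p) : ∫⁻ x in T.cell n p, f (T.proj x) ∂μ = ∫⁻ y in T.cell 0 p, f y ∂μ := by
  calc ∫⁻ x in T.cell n p, f (T.proj x) ∂μ
      = ∫⁻ y, y ∂(μ.restrict (T.cell n p)).map (fun x => f (T.proj x)) :=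
        (lintegral_map' aemeasurable_id (T.aemeasurable_comp_proj hf hn)).symm
    _ = ∫⁻ y, y ∂(μ.restrict (T.cell 0 p)).map f := by rw [T.map_restrict_cell_comp_proj hf hn]
    _ = ∫⁻ y in T.cell 0 p, f y ∂μ := lintegral_map' aemeasurable_id hf.aemeasurable

lemma map_restrict_cell_iterate {p n : ℕ} (hn : n < T.r p) :
    (μ.restrict (T.cell 0 p)).map U^[n] = μ.restrict (T.cell n p) := by
  ext E hE
  rw [Measure.map_apply (T.measurable_U.iterate n) hE, Measure.restrict_apply' (T.cell_meas 0 p),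
    Measure.restrict_apply' (T.cell_meas n p), ← T.preimage_iterate_cell hn, ← preimage_inter,
    (T.measurePreserving_U.iterate n).measure_preimage
      (hE.inter (T.cell_meas n p)).nullMeasurableSet]

lemma setLIntegral_cell_comp_iterate_proj {f : Δ → ℝ≥0∞} (hf : Measurable f) {p j n : ℕ}
    (hj : j < T.r p) (hn : n < T.r p) :
    ∫⁻ x in T.cell n p, f (U^[j] (T.proj x)) ∂μ = ∫⁻ y in T.cell j p, f y ∂μ := by
  rw [T.setLIntegral_cell_comp_proj (f := fun y => f (U^[j] y))
    (hf.comp (T.measurable_U.iterate j)) hn, ← T.map_restrict_cell_iterate hj,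
    lintegral_map hf (T.measurable_U.iterate j)]

lemma ae_restrict_cell_comp_proj {P : Δ → Prop} (hP : ∀ᵐ y ∂μ, P y) {p n : ℕ}
    (hn : n < T.r p) : ∀ᵐ x ∂μ.restrict (T.cell n p), P (T.proj x) := by
  set N := toMeasurable μ {y | ¬ P y}
  have hN : MeasurableSet N := measurableSet_toMeasurable _ _
  have hnull : μ (T.cell n p ∩ T.proj ⁻¹' N) = 0 := by
    rw [T.measure_cell_inter_preimage_proj hn hN]
    exact measure_mono_null inter_subset_left (by rwa [measure_toMeasurable])
  rw [ae_iff, Measure.restrict_apply' (T.cell_meas n p)]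
  refine measure_mono_null ?_ hnull
  exact fun x hx => ⟨hx.2, subset_toMeasurable μ _ hx.1⟩

lemma towerSum_congr_ae {g h : Δ → ℝ} (hgh : g =ᵐ[μ] h) : T.towerSum g =ᵐ[μ] T.towerSum h := by
  have hcell : ∀ i : ℕ × ℕ,
      ∀ᵐ x ∂μ.restrict (T.cell i.1 i.2), T.towerSum g x = T.towerSum h x := by
    rintro ⟨n, p⟩
    by_cases hn : n < T.r p
    · have hj : ∀ j, ∀ᵐ x ∂μ.restrict (T.cell n p),
          g (U^[j] (T.proj x)) = h (U^[j] (T.proj x)) := fun j =>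
        T.ae_restrict_cell_comp_proj
          ((T.measurePreserving_U.iterate j).quasiMeasurePreserving.ae_eq hgh) hn
      filter_upwards [ae_all_iff.2 hj, ae_restrict_mem (T.cell_meas n p)] with x hx hxc
      rw [T.towerSum_of_mem hxc, T.towerSum_of_mem hxc]
      exact Finset.sum_congr rfl fun j _ => hx j
    · simp [T.cell_empty n p (not_lt.1 hn)]
  have h := (ae_restrict_iUnion_iff _ _).2 hcell
  rwa [T.iUnion_cell, Measure.restrict_univ] at h

lemma aemeasurable_towerSum {g : Δ → ℝ} (hg : Measurable g) : AEMeasurable (T.towerSum g) μ := by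
  have hcell : ∀ i : ℕ × ℕ, AEMeasurable (T.towerSum g) (μ.restrict (T.cell i.1 i.2)) := by
    rintro ⟨n, p⟩
    by_cases hn : n < T.r p
    · have hF : Measurable fun y => ∑ j ∈ range n, g (U^[j] y) :=
        Finset.measurable_sum _ fun j _ => hg.comp (T.measurable_U.iterate j)
      exact (T.aemeasurable_comp_proj hF hn).congr
        (ae_restrict_of_forall_mem (T.cell_meas n p) fun x hx => (T.towerSum_of_mem hx).symm)
    · simp [T.cell_empty n p (not_lt.1 hn)]
  have h := aemeasurable_iUnion_iff.2 hcell
  rwa [T.iUnion_cell, Measure.restrict_univ] at h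

lemma tsum_natCast_rpow_mul_measure_level_rpow_lt_top {C ρ : ℝ} (htails : T.ExpTails C ρ)
    (hρ0 : 0 ≤ ρ) (hρ1 : ρ < 1) {s θ : ℝ} (hs : 0 ≤ s) (hθ : 0 < θ) :
    ∑' n : ℕ, (n : ℝ≥0∞) ^ s * μ (T.level n) ^ θ < ∞ := by
  have hterm : ∀ n : ℕ, μ (T.level n) ^ θ ≤ ENNReal.ofReal C ^ θ * (ENNReal.ofReal ρ ^ θ) ^ n := by
    intro n
    grw [htails n]
    rw [ENNReal.ofReal_mul' (pow_nonneg hρ0 n), ENNReal.mul_rpow_of_nonneg _ _ hθ.le,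
      ENNReal.ofReal_pow hρ0, ← ENNReal.rpow_natCast_mul, mul_comm (n : ℝ),
      ENNReal.rpow_mul_natCast]
  calc ∑' n : ℕ, (n : ℝ≥0∞) ^ s * μ (T.level n) ^ θ
      ≤ ∑' n : ℕ, ENNReal.ofReal C ^ θ * ((n : ℝ≥0∞) ^ s * (ENNReal.ofReal ρ ^ θ) ^ n) :=
        ENNReal.tsum_le_tsum fun n => by grw [hterm n]; rw [mul_left_comm]
    _ < ∞ := by
      rw [ENNReal.tsum_mul_left]
      exact ENNReal.mul_lt_top (ENNReal.rpow_lt_top_of_nonneg hθ.le ENNReal.ofReal_ne_top)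
        (ENNReal.tsum_natCast_rpow_mul_pow_lt_top
          (ENNReal.rpow_lt_one (ENNReal.ofReal_lt_one.2 hρ1) hθ) hs)

lemma setLIntegral_cell_towerSum_rpow_le {g : Δ → ℝ} (hg : Measurable g) {q : ℝ} (hq : 1 ≤ q)
    (n p : ℕ) :
    ∫⁻ x in T.cell n p, ‖T.towerSum g x‖ₑ ^ q ∂μ
      ≤ (n : ℝ≥0∞) ^ (q - 1) * ∑ j ∈ range n, ∫⁻ y in T.cell j p, ‖g y‖ₑ ^ q ∂μ := by
  by_cases hn : n < T.r p
  swap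
  · simp [T.cell_empty n p (not_lt.1 hn)]
  have hgq : Measurable fun y => ‖g y‖ₑ ^ q := hg.enorm.pow_const q
  calc ∫⁻ x in T.cell n p, ‖T.towerSum g x‖ₑ ^ q ∂μ
      ≤ ∫⁻ x in T.cell n p, (n : ℝ≥0∞) ^ (q - 1) *
          ∑ j ∈ range n, ‖g (U^[j] (T.proj x))‖ₑ ^ q ∂μ := by
        refine setLIntegral_mono' (T.cell_meas n p) fun x hx => ?_
        rw [T.towerSum_of_mem hx]
        grw [enorm_sum_le]
        simpa using ENNReal.rpow_sum_le_const_mul_sum_rpow (range n)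
          (fun j => ‖g (U^[j] (T.proj x))‖ₑ) hq
    _ = (n : ℝ≥0∞) ^ (q - 1) *
          ∑ j ∈ range n, ∫⁻ x in T.cell n p, ‖g (U^[j] (T.proj x))‖ₑ ^ q ∂μ := by
        rw [lintegral_const_mul' _ _ (ENNReal.rpow_ne_top_of_nonneg (by linarith)
          (ENNReal.natCast_ne_top n)), lintegral_finsetSum']
        exact fun j _ => T.aemeasurable_comp_proj (hgq.comp (T.measurable_U.iterate j)) hn
    _ = (n : ℝ≥0∞) ^ (q - 1) * ∑ j ∈ range n, ∫⁻ y in T.cell j p, ‖g y‖ₑ ^ q ∂μ := by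
        congr 1
        exact Finset.sum_congr rfl fun j hj =>
          T.setLIntegral_cell_comp_iterate_proj hgq ((Finset.mem_range.1 hj).trans hn) hn

lemma setLIntegral_level_towerSum_rpow_le {g : Δ → ℝ} (hg : Measurable g) {q : ℝ} (hq : 1 ≤ q)
    (n : ℕ) :
    ∫⁻ x in T.level n, ‖T.towerSum g x‖ₑ ^ q ∂μ ≤ (n : ℝ≥0∞) ^ q * ∫⁻ y, ‖g y‖ₑ ^ q ∂μ := by
  calc ∫⁻ x in T.level n, ‖T.towerSum g x‖ₑ ^ q ∂μ
      = ∑' p, ∫⁻ x in T.cell n p, ‖T.towerSum g x‖ₑ ^ q ∂μ :=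
        lintegral_iUnion (T.cell_meas n) (T.pairwise_disjoint_cell n) _
    _ ≤ ∑' p, (n : ℝ≥0∞) ^ (q - 1) * ∑ j ∈ range n, ∫⁻ y in T.cell j p, ‖g y‖ₑ ^ q ∂μ :=
        ENNReal.tsum_le_tsum fun p => T.setLIntegral_cell_towerSum_rpow_le hg hq n p
    _ = (n : ℝ≥0∞) ^ (q - 1) * ∑ j ∈ range n, ∫⁻ y in T.level j, ‖g y‖ₑ ^ q ∂μ := by
        rw [ENNReal.tsum_mul_left, Summable.tsum_finsetSum fun _ _ => ENNReal.summable]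
        congr 1
        exact Finset.sum_congr rfl fun j _ =>
          (lintegral_iUnion (T.cell_meas j) (T.pairwise_disjoint_cell j) _).symm
    _ ≤ (n : ℝ≥0∞) ^ (q - 1) * ∑ _j ∈ range n, ∫⁻ y, ‖g y‖ₑ ^ q ∂μ := by
        gcongr
        exact Measure.restrict_le_self
    _ = (n : ℝ≥0∞) ^ q * ∫⁻ y, ‖g y‖ₑ ^ q ∂μ := by
        rw [Finset.sum_const, Finset.card_range, nsmul_eq_mul, ← mul_assoc,
          ENNReal.rpow_sub_one_mul_self (ENNReal.natCast_ne_top n) (by linarith)]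

lemma lintegral_eq_tsum_level (f : Δ → ℝ≥0∞) :
    ∫⁻ x, f x ∂μ = ∑' n, ∫⁻ x in T.level n, f x ∂μ := by
  rw [← lintegral_iUnion T.measurableSet_level T.pairwise_disjoint_level, T.iUnion_level,
    Measure.restrict_univ]

theorem memLp_towerSum_of_lt {C ρ : ℝ} (htails : T.ExpTails C ρ) (hρ0 : 0 ≤ ρ) (hρ1 : ρ < 1)
    {g : Δ → ℝ} {p q : ℝ} (hp : 0 < p) (hpq : p < q) (hq : 1 ≤ q)
    (hg : MemLp g (ENNReal.ofReal q) μ) : MemLp (T.towerSum g) (ENNReal.ofReal p) μ := by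
  obtain ⟨h, hh, hgh⟩ := hg.aestronglyMeasurable
  refine MemLp.ae_eq (T.towerSum_congr_ae hgh).symm ?_
  replace hh : Measurable h := hh.measurable
  have hq0 : 0 < q := hp.trans hpq
  have hA : ∫⁻ y, ‖h y‖ₑ ^ q ∂μ ≠ ∞ := by
    have := lintegral_rpow_enorm_lt_top_of_eLpNorm_lt_top (by simpa using hq0)
      ENNReal.ofReal_ne_top (hg.ae_eq hgh).eLpNorm_lt_top
    rw [ENNReal.toReal_ofReal hq0.le] at this
    exact this.ne
  have hG := T.aemeasurable_towerSum hh
  have hlevel : ∀ n : ℕ, ∫⁻ x in T.level n, ‖T.towerSum h x‖ₑ ^ p ∂μ ≤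
      (∫⁻ y, ‖h y‖ₑ ^ q ∂μ) ^ (p / q) * ((n : ℝ≥0∞) ^ p * μ (T.level n) ^ (1 - p / q)) := by
    intro n
    calc ∫⁻ x in T.level n, ‖T.towerSum h x‖ₑ ^ p ∂μ
        ≤ (∫⁻ x in T.level n, ‖T.towerSum h x‖ₑ ^ q ∂μ) ^ (p / q) *
            μ (T.level n) ^ (1 - p / q) := by
          simpa only [Measure.restrict_apply_univ] using
            lintegral_rpow_le_lintegral_rpow_mul_measure_univ _ hG.enorm.restrict hp hpq
      _ ≤ ((n : ℝ≥0∞) ^ q * ∫⁻ y, ‖h y‖ₑ ^ q ∂μ) ^ (p / q) * μ (T.level n) ^ (1 - p / q) := by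
          gcongr
          exact T.setLIntegral_level_towerSum_rpow_le hh hq n
      _ = _ := by
          rw [ENNReal.mul_rpow_of_nonneg _ _ (by positivity), ← ENNReal.rpow_mul,
            mul_div_cancel₀ p hq0.ne']
          ring
  refine ⟨hG.aestronglyMeasurable, ?_⟩
  rw [eLpNorm_lt_top_iff_lintegral_rpow_enorm_lt_top (by simpa using hp) ENNReal.ofReal_ne_top,
    ENNReal.toReal_ofReal hp.le, T.lintegral_eq_tsum_level]
  refine (ENNReal.tsum_le_tsum hlevel).trans_lt ?_
  rw [ENNReal.tsum_mul_left]
  exact ENNReal.mul_lt_top (ENNReal.rpow_lt_top_of_nonneg (by positivity) hA)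
    (T.tsum_natCast_rpow_mul_measure_level_rpow_lt_top htails hρ0 hρ1 hp.le
      (sub_pos.2 ((div_lt_one hq0).2 hpq)))

end YoungTower

theorem towerSum_memLp_general
    {Δ : Type*} [MeasurableSpace Δ] {μ : Measure Δ} {U : Δ → Δ}
    (T : YoungTower μ U)
    (C0 ρ : ℝ) (hρ0 : 0 < ρ) (hρ1 : ρ < 1) (htails : T.ExpTails C0 ρ)
    (g : Δ → ℝ)
    (hg : ∀ p : ℝ, 1 ≤ p → p < 2 → MemLp g (ENNReal.ofReal p) μ) :
    ∀ p : ℝ, 1 ≤ p → p < 2 → MemLp (T.towerSum g) (ENNReal.ofReal p) μ := by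
  intro p hp1 hp2
  exact T.memLp_towerSum_of_lt htails hρ0.le hρ1 (by linarith) (by linarith : p < (p + 2) / 2)
    (by linarith) (hg _ (by linarith) (by linarith))

/-- Lemma `integrable`: on an expanding Young tower with exponentially small tails, if
`g ∈ L^p(μ)` for all `p < 2`, then `G(x) = ∑_{j<ω(x)} g(U^j π₀ x)` also belongs to
`L^p(μ)` for all `p < 2`. -/
theorem towerSum_memLp
    {Δ : Type*} [MeasurableSpace Δ] {μ : Measure Δ} {U : Δ → Δ}
    (T : YoungTower μ U)
    (C0 ρ : ℝ) (hC0 : 0 < C0) (hρ0 : 0 < ρ) (hρ1 : ρ < 1) (htails : T.ExpTails C0 ρ)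
    (g : Δ → ℝ)
    (hg : ∀ p : ℝ, 1 ≤ p → p < 2 → MemLp g (ENNReal.ofReal p) μ) :
    ∀ p : ℝ, 1 ≤ p → p < 2 → MemLp (T.towerSum g) (ENNReal.ofReal p) μ :=
  towerSum_memLp_general T C0 ρ hρ0 hρ1 htails g hg
end
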